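/- arXiv:2202.08980 — 5 statements merged into one kernel-verified Lean document; each statement's English description precedes it below -/
import Mathlib

section
/- Assume 0 < q < 1, α > 0, 0 < p ≤ 2, with the additional hypothesis a ≥ q(1−q) in case p = 2, and assume 0 < q < p/2 ≤ 1. Then g(x(t)) − g* = O(1/t^{2q}) as t → ∞ and ‖ẋ(t)‖ = O(1/t^{q}) as t → ∞. -/
/-!
Once `6 t^(q-1) ≤ α`, testing the equation against `ẋ` and `x - x*` and using the convexity of `g`
shows that the energy `lyapunov` has derivative at most `(a p / 2) ‖x*‖² t^(2q-p-1)`, which is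
integrable at infinity because `2q < p`; so the energy stays bounded. Absorbing the cross term
`2q t^(2q-1) ⟪x - x*, ẋ⟫` by Young's inequality bounds the energy from below by
`t^(2q) (g(x) - g* + ‖ẋ‖²/4) - (a/2) ‖x*‖²`, and both rates follow.
-/

open Filter Topology Set RealInnerProductSpace

theorem ConvexOn.inner_le_sub_of_hasGradientAt {H : Type*} [NormedAddCommGroup H]
    [InnerProductSpace ℝ H] [CompleteSpace H] {g : H → ℝ} (hg : ConvexOn ℝ univ g) {y d : H}
    (hd : HasGradientAt g d y) (z : H) : ⟪d, z - y⟫ ≤ g z - g y := by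
  have hline : ConvexOn ℝ univ (g ∘ AffineMap.lineMap (k := ℝ) y z) := by
    simpa using hg.comp_affineMap (AffineMap.lineMap (k := ℝ) y z)
  have hd' : HasFDerivAt g (InnerProductSpace.toDual ℝ H d) (AffineMap.lineMap y z (0 : ℝ)) := by
    simpa using hd.hasFDerivAt
  have hderiv : HasDerivAt (g ∘ AffineMap.lineMap (k := ℝ) y z) ⟪d, z - y⟫ 0 :=
    hd'.comp_hasDerivAt 0 AffineMap.hasDerivAt_lineMap
  simpa [slope_def_field] using
    hline.le_slope_of_hasDerivAt (mem_univ 0) (mem_univ 1) zero_lt_one hderiv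

theorem le_add_of_hasDerivAt_le_rpow {f f' : ℝ → ℝ} {T c r : ℝ} (hT : 0 < T) (hr : r < 0)
    (hc : 0 ≤ c) (hf : ∀ t ≥ T, HasDerivAt f (f' t) t) (hf' : ∀ t ≥ T, f' t ≤ c * t ^ (r - 1))
    {t : ℝ} (ht : T ≤ t) : f t ≤ f T + c / -r * T ^ r := by
  have hG (s : ℝ) (hs : T ≤ s) :
      HasDerivAt (fun s => f s - c / r * s ^ r) (f' s - c / r * (r * s ^ (r - 1))) s :=
    (hf s hs).sub ((Real.hasDerivAt_rpow_const (Or.inl (hT.trans_le hs).ne')).const_mul _)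
  have hanti : AntitoneOn (fun s => f s - c / r * s ^ r) (Ici T) := by
    refine antitoneOn_of_hasDerivWithinAt_nonpos (convex_Ici T)
      (fun s hs => (hG s hs).continuousAt.continuousWithinAt)
      (fun s hs => (hG s (interior_subset hs)).hasDerivWithinAt) fun s hs => ?_
    have hs : T ≤ s := interior_subset hs
    rw [← mul_assoc, div_mul_cancel₀ c hr.ne]
    linarith [hf' s hs]
  have hdecr := hanti self_mem_Ici ht ht
  have htail : c / r * t ^ r ≤ 0 :=
    mul_nonpos_of_nonpos_of_nonneg (div_nonpos_of_nonneg_of_nonpos hc hr.le)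
      (Real.rpow_nonneg (hT.le.trans ht) r)
  simp only at hdecr
  rw [div_neg, neg_mul]
  linarith

theorem exists_abs_le_div_rpow {f : ℝ → ℝ} {r t₀ T C : ℝ} (hT : 0 < T) (hT₀ : t₀ ≤ T)
    (h : ∀ t ≥ T, t ^ r * |f t| ≤ C) :
    ∃ C > (0:ℝ), ∃ t₁ ≥ t₀, ∀ t ≥ t₁, |f t| ≤ C / t ^ r := by
  refine ⟨max C 1, by positivity, T, hT₀, fun t ht => ?_⟩
  rw [le_div_iff₀ (Real.rpow_pos_of_pos (hT.trans_le ht) r), mul_comm]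
  exact (h t ht).trans (le_max_left C 1)

section
variable {H : Type*} [NormedAddCommGroup H] [InnerProductSpace ℝ H]
  (g : H → ℝ) (g' : H → H) (x x' x'' : ℝ → H) (xstar : H) (α q a p : ℝ)

noncomputable def lyapunov (t : ℝ) : ℝ :=
  t ^ (2*q) * (g (x t) - g xstar) + a/2 * t ^ (2*q-p) * (‖x t‖^2 - ‖xstar‖^2)
    + 1/2 * t ^ (2*q) * ‖x' t‖^2 + 2*q * t ^ (2*q-1) * ⟪x t - xstar, x' t⟫
    + (q*α * t ^ (q-1) - q*(2*q-1) * t ^ (2*q-2)) * ‖x t - xstar‖^2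

noncomputable def lyapunovDeriv (t : ℝ) : ℝ :=
  a*p/2 * ‖xstar‖^2 * t ^ (2*q-p-1)
    + 2*q * t ^ (2*q-1) * (g (x t) - g xstar - ⟪g' (x t), x t - xstar⟫)
    - (α - 3*q * t ^ (q-1)) * t ^ q * ‖x' t‖^2
    - a*p/2 * t ^ (2*q-p-1) * ‖x t‖^2
    - q * t ^ (q-2) * (α*(1-q) - (2*q-1)*(2-2*q) * t ^ (q-1) + a * t ^ (q-p+1))
      * ‖x t - xstar‖^2

variable {g g' x x' x'' xstar α q a p}

theorem hasDerivAt_lyapunov [CompleteSpace H] {t : ℝ} (ht : 0 < t) (hx : HasDerivAt x (x' t) t)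
    (hx' : HasDerivAt x' (x'' t) t) (hg : HasGradientAt g (g' (x t)) (x t))
    (hODE : x'' t + (α / t ^ q) • x' t + g' (x t) + (a / t ^ p) • x t = 0) :
    HasDerivAt (lyapunov g x x' xstar α q a p) (lyapunovDeriv g g' x x' xstar α q a p t) t := by
  have hpow (r : ℝ) : HasDerivAt (fun s : ℝ => s ^ r) (r * t ^ (r-1)) t :=
    Real.hasDerivAt_rpow_const (Or.inl ht.ne')
  have hgx : HasDerivAt (fun s => g (x s)) ⟪g' (x t), x' t⟫ t :=
    hg.hasFDerivAt.comp_hasDerivAt t hx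
  have hu := hx.sub_const xstar
  have hraw := (((((hpow (2*q)).mul (hgx.sub_const (g xstar))).add
    (((hpow (2*q-p)).const_mul (a/2)).mul (hx.norm_sq.sub_const (‖xstar‖^2)))).add
    (((hpow (2*q)).const_mul (1/2)).mul hx'.norm_sq)).add
    (((hpow (2*q-1)).const_mul (2*q)).mul (hu.inner ℝ hx'))).add
    ((((hpow (q-1)).const_mul (q*α)).sub ((hpow (2*q-2)).const_mul (q*(2*q-1)))).mul hu.norm_sq)
  have hODE_inner (v : H) :
      ⟪v, x'' t⟫ = -(α / t ^ q) * ⟪v, x' t⟫ - ⟪v, g' (x t)⟫ - a / t ^ p * ⟪v, x t⟫ := by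
    have h := congrArg (⟪v, ·⟫) hODE
    simp only [inner_add_right, inner_smul_right, inner_zero_right] at h
    linarith
  have hpolar : ⟪x t - xstar, x t⟫ = (‖x t‖^2 - ‖xstar‖^2 + ‖x t - xstar‖^2) / 2 := by
    rw [norm_sub_sq_real, inner_sub_left, real_inner_self_eq_norm_sq, real_inner_comm]
    ring
  refine hraw.congr_deriv ?_
  unfold lyapunovDeriv
  rw [hODE_inner, hODE_inner, hpolar, real_inner_self_eq_norm_sq, real_inner_comm (x' t) (x t),
    real_inner_comm (x' t) (g' (x t)), real_inner_comm (x t - xstar) (g' (x t))]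
  simp only [Pi.sub_apply, two_mul, Real.rpow_sub ht, Real.rpow_add ht, Real.rpow_one,
    Real.rpow_two]
  field_simp
  ring

theorem lyapunovDeriv_le {t : ℝ} (ht : 0 < t) (hq0 : 0 < q) (hq1 : q < 1) (ha : 0 ≤ a)
    (hp : 0 ≤ p) (hconv : g (x t) - g xstar ≤ ⟪g' (x t), x t - xstar⟫)
    (hα : 6 * t ^ (q-1) ≤ α) :
    lyapunovDeriv g g' x x' xstar α q a p t ≤ a*p/2 * ‖xstar‖^2 * t ^ (2*q-p-1) := by
  have he : 0 < t ^ (q-1) := Real.rpow_pos_of_pos ht _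
  have hgap : 2*q * t ^ (2*q-1) * (g (x t) - g xstar - ⟪g' (x t), x t - xstar⟫) ≤ 0 :=
    mul_nonpos_of_nonneg_of_nonpos (by positivity) (by linarith)
  have hkin : 0 ≤ (α - 3*q * t ^ (q-1)) * t ^ q * ‖x' t‖^2 := by
    have : 3*q * t ^ (q-1) ≤ α := by nlinarith
    exact mul_nonneg (mul_nonneg (by linarith) (by positivity)) (by positivity)
  have htikh : 0 ≤ a*p/2 * t ^ (2*q-p-1) * ‖x t‖^2 := by positivity
  have hdamp : 0 ≤ q * t ^ (q-2) * (α*(1-q) - (2*q-1)*(2-2*q) * t ^ (q-1) + a * t ^ (q-p+1))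
      * ‖x t - xstar‖^2 := by
    have h1 : (2*q-1)*(2-2*q) * t ^ (q-1) ≤ α*(1-q) := by
      nlinarith [mul_nonneg (by linarith : (0:ℝ) ≤ 1 - q)
        (by nlinarith : 0 ≤ α - 2*(2*q-1) * t ^ (q-1))]
    have h2 : 0 ≤ a * t ^ (q-p+1) := by positivity
    exact mul_nonneg (mul_nonneg (by positivity) (by linarith)) (by positivity)
  unfold lyapunovDeriv
  linarith

theorem lyapunov_lower_bound {t : ℝ} (ht : 1 ≤ t) (hq0 : 0 < q) (hq1 : q < 1) (hqp : 2*q ≤ p)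
    (ha : 0 ≤ a) (hα : 6 * t ^ (q-1) ≤ α) :
    t ^ (2*q) * (g (x t) - g xstar + ‖x' t‖^2 / 4)
      ≤ lyapunov g x x' xstar α q a p t + a/2 * ‖xstar‖^2 := by
  have ht0 : 0 < t := by linarith
  have he : 0 < t ^ (q-1) := Real.rpow_pos_of_pos ht0 _
  have h2q : t ^ (2*q) = t ^ q * t ^ q := by rw [two_mul, Real.rpow_add ht0]
  have h2q1 : t ^ (2*q-1) = t ^ q * t ^ (q-1) := by rw [← Real.rpow_add ht0]; ring_nf
  have h2q2 : t ^ (2*q-2) = t ^ (q-1) * t ^ (q-1) := by rw [← Real.rpow_add ht0]; ring_nf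
  have htikh : -(a/2 * ‖xstar‖^2) ≤ a/2 * t ^ (2*q-p) * (‖x t‖^2 - ‖xstar‖^2) := by
    have h0 : 0 ≤ t ^ (2*q-p) := Real.rpow_nonneg ht0.le _
    have h1 : t ^ (2*q-p) ≤ 1 := Real.rpow_le_one_of_one_le_of_nonpos ht (by linarith)
    nlinarith [mul_nonneg ha (mul_nonneg h0 (sq_nonneg ‖x t‖)),
      mul_nonneg ha (mul_nonneg (sub_nonneg.2 h1) (sq_nonneg ‖xstar‖))]
  have hcross :
      -(t ^ q * t ^ q * ‖x' t‖^2 / 4 + 4*q^2 * (t ^ (q-1) * t ^ (q-1)) * ‖x t - xstar‖^2)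
      ≤ 2*q * (t ^ q * t ^ (q-1)) * ⟪x t - xstar, x' t⟫ := by
    have hcs := neg_le_of_abs_le (abs_real_inner_le_norm (x t - xstar) (x' t))
    have hc : 0 ≤ 2*q * (t ^ q * t ^ (q-1)) := by positivity
    nlinarith [mul_le_mul_of_nonneg_left hcs hc,
      sq_nonneg (t ^ q * ‖x' t‖ / 2 - 2*q * t ^ (q-1) * ‖x t - xstar‖)]
  have hcoef : 4*q^2 * (t ^ (q-1) * t ^ (q-1)) * ‖x t - xstar‖^2
      ≤ (q*α * t ^ (q-1) - q*(2*q-1) * (t ^ (q-1) * t ^ (q-1))) * ‖x t - xstar‖^2 := by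
    refine mul_le_mul_of_nonneg_right ?_ (sq_nonneg _)
    nlinarith [mul_nonneg (mul_pos hq0 he).le (by nlinarith : 0 ≤ α - (6*q-1) * t ^ (q-1))]
  unfold lyapunov
  rw [h2q, h2q1, h2q2]
  linarith

theorem exists_rpow_mul_energy_le [CompleteSpace H] {T : ℝ} (hT : 1 ≤ T) (hq0 : 0 < q)
    (hq1 : q < 1) (ha : 0 ≤ a) (hqp : 2*q < p) (hg : ConvexOn ℝ univ g)
    (hg' : ∀ y, HasGradientAt g (g' y) y) (hx : ∀ t ≥ T, HasDerivAt x (x' t) t)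
    (hx' : ∀ t ≥ T, HasDerivAt x' (x'' t) t)
    (hODE : ∀ t ≥ T, x'' t + (α / t ^ q) • x' t + g' (x t) + (a / t ^ p) • x t = 0)
    (hα : ∀ t ≥ T, 6 * t ^ (q-1) ≤ α) :
    ∃ C, ∀ t ≥ T, t ^ (2*q) * (g (x t) - g xstar + ‖x' t‖^2 / 4) ≤ C := by
  have hTpos : 0 < T := by linarith
  have hp : 0 ≤ p := by linarith
  have hconv (t : ℝ) : g (x t) - g xstar ≤ ⟪g' (x t), x t - xstar⟫ := by
    have h := hg.inner_le_sub_of_hasGradientAt (hg' (x t)) xstar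
    rw [← neg_sub, inner_neg_right] at h
    linarith
  have hgrowth (t : ℝ) (ht : T ≤ t) := le_add_of_hasDerivAt_le_rpow hTpos (by linarith)
    (by positivity : 0 ≤ a*p/2 * ‖xstar‖^2)
    (fun s hs => hasDerivAt_lyapunov (hTpos.trans_le hs) (hx s hs) (hx' s hs) (hg' _) (hODE s hs))
    (fun s hs => lyapunovDeriv_le (hTpos.trans_le hs) hq0 hq1 ha hp (hconv s) (hα s hs))
    ht
  refine ⟨lyapunov g x x' xstar α q a p T
    + a*p/2 * ‖xstar‖^2 / -(2*q-p) * T ^ (2*q-p) + a/2 * ‖xstar‖^2, fun t ht => ?_⟩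
  linarith [hgrowth t ht, lyapunov_lower_bound (g := g) (x := x) (x' := x') (xstar := xstar)
    (p := p) (hT.trans ht) hq0 hq1 hqp.le ha (hα t ht)]

end

theorem stmt0_general
    {H : Type*} [NormedAddCommGroup H] [InnerProductSpace ℝ H] [CompleteSpace H]
    (g : H → ℝ) (g' : H → H)
    (hg_convex : ConvexOn ℝ Set.univ g)
    (hg_grad : ∀ y : H, HasGradientAt g (g' y) y)
    (t₀ α q a p : ℝ) (hα : 0 < α) (hq0 : 0 < q) (ha0 : 0 < a)
    (x x' x'' : ℝ → H)
    (hx : ∀ t ≥ t₀, HasDerivAt x (x' t) t)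
    (hx' : ∀ t ≥ t₀, HasDerivAt x' (x'' t) t)
    (hODE : ∀ t ≥ t₀, x'' t + (α / t ^ q) • x' t + g' (x t) + (a / t ^ p) • x t = 0)
    (xstar : H) (hxstar : ∀ y : H, g xstar ≤ g y)
    (hq1 : q < 1)
    (hqp : q < p / 2) :
    (∃ C > (0:ℝ), ∃ t₁ ≥ t₀, ∀ t ≥ t₁, |g (x t) - g xstar| ≤ C / t ^ (2 * q)) ∧
    (∃ C > (0:ℝ), ∃ t₁ ≥ t₀, ∀ t ≥ t₁, |‖x' t‖| ≤ C / t ^ (q)) := by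
  have hdecay : Tendsto (fun t : ℝ => 6 * t ^ (q - 1)) atTop (𝓝 0) := by
    simpa [neg_sub] using (tendsto_rpow_neg_atTop (by linarith : 0 < 1 - q)).const_mul 6
  obtain ⟨T, hT⟩ := eventually_atTop.1 <| (eventually_ge_atTop t₀).and <|
    (eventually_ge_atTop 1).and (hdecay.eventually (eventually_le_nhds hα))
  obtain ⟨hT₀, hT1, -⟩ := hT T le_rfl
  obtain ⟨C, hC⟩ := exists_rpow_mul_energy_le (xstar := xstar) hT1 hq0 hq1 ha0.le
    (by linarith) hg_convex hg_grad (fun t ht => hx t (hT t ht).1)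
    (fun t ht => hx' t (hT t ht).1) (fun t ht => hODE t (hT t ht).1) (fun t ht => (hT t ht).2.2)
  have hTpos : 0 < T := by linarith
  constructor
  · refine exists_abs_le_div_rpow (C := C) hTpos hT₀ fun t ht => ?_
    have hpow : 0 ≤ t ^ (2 * q) := Real.rpow_nonneg (hTpos.trans_le ht).le _
    rw [abs_of_nonneg (sub_nonneg.2 (hxstar _))]
    nlinarith [hC t ht, mul_nonneg hpow (sq_nonneg ‖x' t‖)]
  · refine exists_abs_le_div_rpow (C := √(4 * C)) hTpos hT₀ fun t ht => ?_
    have hpow : (t ^ q) ^ 2 = t ^ (2 * q) := by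
      rw [← Real.rpow_natCast, ← Real.rpow_mul (hTpos.trans_le ht).le, mul_comm, Nat.cast_ofNat]
    have hsq : (t ^ q * ‖x' t‖) ^ 2 ≤ 4 * C := by
      rw [mul_pow, hpow]
      nlinarith [hC t ht, mul_nonneg (Real.rpow_nonneg (hTpos.trans_le ht).le (2 * q))
        (sub_nonneg.2 (hxstar (x t)))]
    rw [abs_norm]
    exact (le_abs_self _).trans (Real.abs_le_sqrt hsq)

theorem stmt0
    {H : Type*} [NormedAddCommGroup H] [InnerProductSpace ℝ H] [CompleteSpace H]
    (g : H → ℝ) (g' : H → H)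
    (hg_convex : ConvexOn ℝ Set.univ g)
    (hg_grad : ∀ y : H, HasGradientAt g (g' y) y)
    (hg_lip : ∀ s : Set H, Bornology.IsBounded s → ∃ K : NNReal, LipschitzOnWith K g' s)
    (t₀ α q a p : ℝ) (ht₀ : 0 < t₀) (hα : 0 < α) (hq0 : 0 < q) (ha0 : 0 < a) (hp0 : 0 < p)
    (x x' x'' : ℝ → H)
    (hx : ∀ t ≥ t₀, HasDerivAt x (x' t) t)
    (hx' : ∀ t ≥ t₀, HasDerivAt x' (x'' t) t)
    (hx''c : ContinuousOn x'' (Set.Ici t₀))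
    (hODE : ∀ t ≥ t₀, x'' t + (α / t ^ q) • x' t + g' (x t) + (a / t ^ p) • x t = 0)
    (xstar : H) (hxstar : ∀ y : H, g xstar ≤ g y)
    (hq1 : q < 1) (hp2 : p ≤ 2) (hpa : p = 2 → a ≥ q * (1 - q))
    (hqp : q < p / 2) (hp21 : p / 2 ≤ 1) :
    (∃ C > (0:ℝ), ∃ t₁ ≥ t₀, ∀ t ≥ t₁, |g (x t) - g xstar| ≤ C / t ^ (2 * q)) ∧
    (∃ C > (0:ℝ), ∃ t₁ ≥ t₀, ∀ t ≥ t₁, |‖x' t‖| ≤ C / t ^ (q)) :=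
  stmt0_general g g' hg_convex hg_grad t₀ α q a p hα hq0 ha0 x x' x'' hx hx' hODE xstar hxstar hq1
    hqp
end

section
/- Assume 0 < q < 1, α > 0, 0 < p ≤ 2, with the additional hypothesis a ≥ q(1−q) in case p = 2, and assume p/2 ≤ q < 1. Then g(x(t)) − g* = O(1/t^{p}) as t → ∞ and ‖ẋ(t)‖ = O(1/t^{p/2}) as t → ∞. -/
/-!
With `u = x - x*`, the energy
`E(t) = t^p (g(x) - g*) + t^p/2 ‖ẋ‖² + a/2 ‖x‖² + 2p t^(p-1) ⟪u, ẋ⟫ + pα t^(p-1-q) ‖u‖²`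
satisfies `t Ė + κ E ≤ a p ‖x*‖²` for large `t`, where `κ = min p ((1 + q - p) / 2)`:
after eliminating `ẍ` with the equation, convexity (`g(x) - g* ≤ ⟪∇g(x), u⟫`) controls the
gradient term, the damping `α t^(1-q) → ∞` absorbs the terms in `‖ẋ‖²` and `‖u‖²`, and
`p ≤ 2q < 1 + q` makes `κ` positive. Hence `t^κ (E - a p ‖x*‖² / κ)` is nonincreasing, so `E`
is bounded, and for large `t` the energy dominates `t^p (g(x) - g*) + t^p/4 ‖ẋ‖²`.
-/

open Filter Set
open scoped RealInnerProductSpace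

theorem ConvexOn.le_sub_of_hasFDerivAt {E : Type*} [NormedAddCommGroup E] [NormedSpace ℝ E]
    {f : E → ℝ} {f' : E →L[ℝ] ℝ} {y : E} (hf : ConvexOn ℝ univ f) (hf' : HasFDerivAt f f' y)
    (z : E) : f' (z - y) ≤ f z - f y := by
  have hφ : HasDerivAt (fun s : ℝ => f (AffineMap.lineMap y z s)) (f' (z - y)) 0 := by
    have hline : HasDerivAt (fun s : ℝ => AffineMap.lineMap y z s) (z - y) 0 :=
      AffineMap.hasDerivAt_lineMap
    exact hf'.comp_hasDerivAt_of_eq 0 hline (by simp)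
  have := (hf.comp_affineMap (AffineMap.lineMap y z)).le_slope_of_hasDerivAt
    (mem_univ 0) (mem_univ 1) zero_lt_one hφ
  simpa [slope_def_field] using this

theorem le_max_of_mul_deriv_add_le {E E' : ℝ → ℝ} {t₁ κ C : ℝ} (ht₁ : 0 < t₁) (hκ : 0 < κ)
    (hE : ∀ t ≥ t₁, HasDerivAt E (E' t) t) (hE' : ∀ t ≥ t₁, t * E' t + κ * E t ≤ C)
    {t : ℝ} (ht : t₁ ≤ t) : E t ≤ max (C / κ) (E t₁) := by
  set F : ℝ → ℝ := fun s => s ^ κ * (E s - C / κ)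
  have hF : ∀ s ≥ t₁, HasDerivAt F (s ^ (κ - 1) * (s * E' s + κ * E s - C)) s := by
    intro s hs
    have hs0 : 0 < s := ht₁.trans_le hs
    refine ((Real.hasDerivAt_rpow_const (p := κ) (Or.inl hs0.ne')).mul
      ((hE s hs).sub_const (C / κ))).congr_deriv ?_
    rw [Real.rpow_sub_one hs0.ne']
    field_simp
    ring
  have hanti : AntitoneOn F (Ici t₁) := by
    refine antitoneOn_of_hasDerivWithinAt_nonpos
      (f' := fun s => s ^ (κ - 1) * (s * E' s + κ * E s - C)) (convex_Ici t₁)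
      (fun s hs => (hF s hs).continuousAt.continuousWithinAt) (fun s hs => ?_) (fun s hs => ?_)
    · rw [interior_Ici] at hs
      exact (hF s (le_of_lt hs)).hasDerivWithinAt
    · rw [interior_Ici] at hs
      have hs0 : 0 < s := ht₁.trans hs
      exact mul_nonpos_of_nonneg_of_nonpos (Real.rpow_nonneg hs0.le _)
        (by linarith [hE' s hs.le])
  have hFt : t ^ κ * (E t - C / κ) ≤ t₁ ^ κ * (E t₁ - C / κ) := hanti self_mem_Ici ht ht
  have htκ : 0 < t ^ κ := Real.rpow_pos_of_pos (ht₁.trans_le ht) κ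
  rcases le_or_gt (E t) (C / κ) with h | h
  · exact le_max_of_le_left h
  · have h₁ : 0 < E t₁ - C / κ :=
      pos_of_mul_pos_right ((mul_pos htκ (sub_pos.2 h)).trans_le hFt) (Real.rpow_nonneg ht₁.le κ)
    have : t ^ κ * (E t - C / κ) ≤ t ^ κ * (E t₁ - C / κ) :=
      hFt.trans (mul_le_mul_of_nonneg_right (Real.rpow_le_rpow ht₁.le ht hκ.le) h₁.le)
    exact le_max_of_le_right (by linarith [le_of_mul_le_mul_left this htκ])

theorem exists_abs_le_div_rpow_of_eventually {f : ℝ → ℝ} {r C : ℝ} (t₀ : ℝ) (hC : 0 < C)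
    (h : ∀ᶠ t in atTop, t ^ r * |f t| ≤ C) :
    ∃ C > (0 : ℝ), ∃ t₁ ≥ t₀, ∀ t ≥ t₁, |f t| ≤ C / t ^ r := by
  obtain ⟨t₁, ht₁⟩ := eventually_atTop.1 (h.and (eventually_gt_atTop 0))
  refine ⟨C, hC, max t₀ t₁, le_max_left _ _, fun t ht => ?_⟩
  obtain ⟨hbound, htpos⟩ := ht₁ t (le_of_max_le_right ht)
  rw [le_div_iff₀ (Real.rpow_pos_of_pos htpos r), mul_comm]
  exact hbound

section

variable {H : Type*} [NormedAddCommGroup H] [InnerProductSpace ℝ H]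

theorem two_mul_abs_inner_le (u v : H) {t : ℝ} (ht : 0 < t) :
    2 * |⟪u, v⟫| ≤ t * ‖v‖ ^ 2 + ‖u‖ ^ 2 / t := by
  have hsq : 0 ≤ (t * ‖v‖ - ‖u‖) ^ 2 / t := by positivity
  have : (t * ‖v‖ - ‖u‖) ^ 2 / t = t * ‖v‖ ^ 2 + ‖u‖ ^ 2 / t - 2 * (‖u‖ * ‖v‖) := by
    field_simp; ring
  linarith [abs_real_inner_le_norm u v]

noncomputable def lyapunovEnergy (g : H → ℝ) (α q a p b : ℝ) (xstar : H) (t : ℝ) (y v : H) : ℝ :=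
  t ^ p * (g y - g xstar) + t ^ p / 2 * ‖v‖ ^ 2 + a / 2 * ‖y‖ ^ 2
    + b * t ^ (p - 1) * ⟪y - xstar, v⟫ + b * α / 2 * t ^ (p - 1 - q) * ‖y - xstar‖ ^ 2

noncomputable def lyapunovEnergyRate (g : H → ℝ) (g' : H → H) (α q a p b : ℝ) (xstar : H)
    (t : ℝ) (y v : H) : ℝ :=
  t ^ (p - 1) * (p * (g y - g xstar) - b * ⟪g' y, y - xstar⟫
      + (p / 2 + b - α * t ^ (1 - q)) * ‖v‖ ^ 2 + b * (p - 1) / t * ⟪y - xstar, v⟫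
      + b * α / 2 * (p - 1 - q) * t ^ (1 - q) / t ^ 2 * ‖y - xstar‖ ^ 2)
    - a * b / t * ⟪y - xstar, y⟫

theorem hasDerivAt_lyapunovEnergy [CompleteSpace H] {g : H → ℝ} {g' : H → H} {α q a p b : ℝ}
    {xstar : H} {x x' x'' : ℝ → H} {t : ℝ} (ht : 0 < t)
    (hx : HasDerivAt x (x' t) t) (hx' : HasDerivAt x' (x'' t) t)
    (hg : HasGradientAt g (g' (x t)) (x t))
    (hODE : x'' t + (α / t ^ q) • x' t + g' (x t) + (a / t ^ p) • x t = 0) :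
    HasDerivAt (fun s => lyapunovEnergy g α q a p b xstar s (x s) (x' s))
      (lyapunovEnergyRate g g' α q a p b xstar t (x t) (x' t)) t := by
  have hgx : HasDerivAt (fun s => g (x s)) ⟪g' (x t), x' t⟫ t := by
    have h := hg.hasFDerivAt.comp_hasDerivAt t hx
    simp only [InnerProductSpace.toDual_apply_apply] at h
    exact h
  have hpow (r : ℝ) : HasDerivAt (fun s : ℝ => s ^ r) (r * t ^ (r - 1)) t :=
    Real.hasDerivAt_rpow_const (Or.inl ht.ne')
  have hu : HasDerivAt (fun s => x s - xstar) (x' t) t := hx.sub_const xstar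
  have hx'' : x'' t = -((α / t ^ q) • x' t + g' (x t) + (a / t ^ p) • x t) := by
    rw [eq_neg_iff_add_eq_zero, ← hODE]; abel
  refine (((((hpow p).mul (hgx.sub_const (g xstar))).add
    (((hpow p).div_const 2).mul hx'.norm_sq)).add (hx.norm_sq.const_mul (a / 2))).add
    (((hpow (p - 1)).const_mul b).mul (hu.inner ℝ hx'))).add
    (((hpow (p - 1 - q)).const_mul (b * α / 2)).mul hu.norm_sq) |>.congr_deriv ?_
  have hR : 0 < t ^ (1 - q) := Real.rpow_pos_of_pos ht _
  have e1 : t ^ p = t ^ (p - 1) * t := by rw [Real.rpow_sub_one ht.ne']; field_simp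
  have e2 : t ^ (p - 1 - 1) = t ^ (p - 1) / t := Real.rpow_sub_one ht.ne' _
  have e3 : t ^ (p - 1 - q) = t ^ (p - 1) * t ^ (1 - q) / t := by
    rw [← Real.rpow_add ht, ← Real.rpow_sub_one ht.ne']; ring_nf
  have e4 : t ^ (p - 1 - q - 1) = t ^ (p - 1) * t ^ (1 - q) / t ^ 2 := by
    rw [Real.rpow_sub_one ht.ne', e3]; ring
  have e5 : t ^ q = t / t ^ (1 - q) := by
    rw [eq_div_iff hR.ne', ← Real.rpow_add ht]; ring_nf; exact Real.rpow_one t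
  rw [hx'']
  simp only [lyapunovEnergyRate, inner_neg_right, inner_add_right, real_inner_smul_right,
    inner_sub_left, inner_sub_right, real_inner_self_eq_norm_sq]
  rw [real_inner_comm (x t) (x' t), real_inner_comm (x' t) (g' (x t)),
    real_inner_comm (x t) (g' (x t)), real_inner_comm xstar (g' (x t)), e2, e3, e4, e5, e1]
  field_simp
  ring

theorem mul_lyapunovEnergyRate_add_mul_lyapunovEnergy (g : H → ℝ) (g' : H → H) (α q a p b κ : ℝ)
    (xstar : H) {t : ℝ} (ht : 0 < t) (y v : H) :
    t * lyapunovEnergyRate g g' α q a p b xstar t y v + κ * lyapunovEnergy g α q a p b xstar t y v =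
      t ^ (p - 1) * ((κ + p - b) * t * (g y - g xstar) + b * t * (g y - g xstar - ⟪g' y, y - xstar⟫)
        + (p / 2 + b + κ / 2 - α * t ^ (1 - q)) * t * ‖v‖ ^ 2 + b * (p - 1 + κ) * ⟪y - xstar, v⟫
        + b * α / 2 * (p - 1 - q + κ) * t ^ (1 - q) / t * ‖y - xstar‖ ^ 2)
      + a / 2 * ((κ - b) * ‖y‖ ^ 2 - b * ‖y - xstar‖ ^ 2 + b * ‖xstar‖ ^ 2) := by
  have e1 : t ^ p = t ^ (p - 1) * t := by rw [Real.rpow_sub_one ht.ne']; field_simp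
  have e3 : t ^ (p - 1 - q) = t ^ (p - 1) * t ^ (1 - q) / t := by
    rw [← Real.rpow_add ht, ← Real.rpow_sub_one ht.ne']; ring_nf
  have hy : ⟪y - xstar, y⟫ = (‖y‖ ^ 2 + ‖y - xstar‖ ^ 2 - ‖xstar‖ ^ 2) / 2 := by
    rw [norm_sub_sq_real, inner_sub_left, real_inner_self_eq_norm_sq, real_inner_comm]; ring
  simp only [lyapunovEnergyRate, lyapunovEnergy, hy, e1, e3]
  field_simp
  ring

theorem mul_lyapunovEnergyRate_add_le [CompleteSpace H] {g : H → ℝ} {g' : H → H}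
    {α q a p κ t : ℝ} {xstar : H} (hg : ConvexOn ℝ univ g) (hg' : ∀ y, HasGradientAt g (g' y) y)
    (hxstar : ∀ y, g xstar ≤ g y) (ha : 0 ≤ a) (hp : 0 < p) (hκp : κ ≤ p) (ht : 0 < t)
    (hV : p / 2 + 2 * p + κ / 2 + p * |p - 1 + κ| ≤ α * t ^ (1 - q))
    (hU : |p - 1 + κ| ≤ (1 + q - p - κ) * (α * t ^ (1 - q))) (y v : H) :
    t * lyapunovEnergyRate g g' α q a p (2 * p) xstar t y v
      + κ * lyapunovEnergy g α q a p (2 * p) xstar t y v ≤ a * p * ‖xstar‖ ^ 2 := by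
  rw [mul_lyapunovEnergyRate_add_mul_lyapunovEnergy _ _ _ _ _ _ _ _ _ ht]
  have hG : 0 ≤ g y - g xstar := sub_nonneg.2 (hxstar y)
  have hI : g y - g xstar - ⟪g' y, y - xstar⟫ ≤ 0 := by
    have h := hg.le_sub_of_hasFDerivAt (hg' y).hasFDerivAt xstar
    rw [InnerProductSpace.toDual_apply_apply, ← neg_sub y xstar, inner_neg_right] at h
    linarith
  have hS : 2 * p * (p - 1 + κ) * ⟪y - xstar, v⟫
      ≤ p * |p - 1 + κ| * (t * ‖v‖ ^ 2) + p * |p - 1 + κ| * (‖y - xstar‖ ^ 2 / t) := by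
    have hk : 2 * p * (p - 1 + κ) * ⟪y - xstar, v⟫ ≤ p * |p - 1 + κ| * (2 * |⟪y - xstar, v⟫|) := by
      calc _ ≤ |2 * p * (p - 1 + κ) * ⟪y - xstar, v⟫| := le_abs_self _
        _ = _ := by rw [abs_mul, abs_mul, abs_of_pos (by positivity : (0 : ℝ) < 2 * p)]; ring
    have hc : 0 ≤ p * |p - 1 + κ| := by positivity
    nlinarith [mul_le_mul_of_nonneg_left (two_mul_abs_inner_le (y - xstar) v ht) hc]
  refine add_le_of_nonpos_of_le (mul_nonpos_of_nonneg_of_nonpos (Real.rpow_nonneg ht.le _) ?_) ?_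
  · have hGt : (κ + p - 2 * p) * t * (g y - g xstar) ≤ 0 :=
      mul_nonpos_of_nonpos_of_nonneg (mul_nonpos_of_nonpos_of_nonneg (by linarith) ht.le) hG
    have hIt : 2 * p * t * (g y - g xstar - ⟪g' y, y - xstar⟫) ≤ 0 :=
      mul_nonpos_of_nonneg_of_nonpos (by positivity) hI
    have hVt : (p / 2 + 2 * p + κ / 2 - α * t ^ (1 - q)) * t * ‖v‖ ^ 2
        + p * |p - 1 + κ| * (t * ‖v‖ ^ 2) ≤ 0 := by
      nlinarith [mul_nonneg ht.le (sq_nonneg ‖v‖)]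
    have hUt : 2 * p * α / 2 * (p - 1 - q + κ) * t ^ (1 - q) / t * ‖y - xstar‖ ^ 2
        + p * |p - 1 + κ| * (‖y - xstar‖ ^ 2 / t) ≤ 0 := by
      have hcoef : p * (|p - 1 + κ| - (1 + q - p - κ) * (α * t ^ (1 - q))) ≤ 0 :=
        mul_nonpos_of_nonneg_of_nonpos hp.le (by linarith)
      calc _ = p * (|p - 1 + κ| - (1 + q - p - κ) * (α * t ^ (1 - q)))
            * (‖y - xstar‖ ^ 2 / t) := by ring
        _ ≤ 0 := mul_nonpos_of_nonpos_of_nonneg hcoef (by positivity)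
    linarith
  · have : (κ - 2 * p) * ‖y‖ ^ 2 - 2 * p * ‖y - xstar‖ ^ 2 ≤ 0 := by
      nlinarith [sq_nonneg ‖y‖, sq_nonneg ‖y - xstar‖]
    nlinarith

theorem eventually_mul_lyapunovEnergyRate_add_le [CompleteSpace H] {g : H → ℝ} {g' : H → H}
    {α q a p κ : ℝ} {xstar : H} (hg : ConvexOn ℝ univ g) (hg' : ∀ y, HasGradientAt g (g' y) y)
    (hxstar : ∀ y, g xstar ≤ g y) (hα : 0 < α) (ha : 0 ≤ a) (hp : 0 < p) (hq : q < 1)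
    (hκp : κ ≤ p) (hκq : κ + p < 1 + q) :
    ∀ᶠ t in atTop, ∀ y v : H,
      t * lyapunovEnergyRate g g' α q a p (2 * p) xstar t y v
        + κ * lyapunovEnergy g α q a p (2 * p) xstar t y v ≤ a * p * ‖xstar‖ ^ 2 := by
  have hR : Tendsto (fun t : ℝ => α * t ^ (1 - q)) atTop atTop :=
    (tendsto_rpow_atTop (by linarith)).const_mul_atTop hα
  filter_upwards [eventually_gt_atTop 0,
    hR.eventually_ge_atTop (p / 2 + 2 * p + κ / 2 + p * |p - 1 + κ|),
    hR.eventually_ge_atTop (|p - 1 + κ| / (1 + q - p - κ))] with t ht hV hU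
  exact mul_lyapunovEnergyRate_add_le hg hg' hxstar ha hp hκp ht hV
    ((div_le_iff₀' (by linarith)).1 hU)

theorem eventually_le_lyapunovEnergy (g : H → ℝ) {α q a p b : ℝ} (xstar : H) (hα : 0 < α)
    (ha : 0 ≤ a) (hb : 0 ≤ b) (hq : q < 1) :
    ∀ᶠ t in atTop, ∀ y v : H,
      t ^ p * (g y - g xstar) + t ^ p / 4 * ‖v‖ ^ 2 ≤ lyapunovEnergy g α q a p b xstar t y v := by
  have hR : Tendsto (fun t : ℝ => α * t ^ (1 - q)) atTop atTop :=
    (tendsto_rpow_atTop (by linarith)).const_mul_atTop hα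
  filter_upwards [eventually_gt_atTop 0, hR.eventually_ge_atTop (2 * b)] with t ht hαR y v
  have e1 : t ^ p = t ^ (p - 1) * t := by rw [Real.rpow_sub_one ht.ne']; field_simp
  have e3 : t ^ (p - 1 - q) = t ^ (p - 1) * t ^ (1 - q) / t := by
    rw [← Real.rpow_add ht, ← Real.rpow_sub_one ht.ne']; ring_nf
  have hS : -(t / 4 * ‖v‖ ^ 2 + b ^ 2 * ‖y - xstar‖ ^ 2 / t) ≤ b * ⟪y - xstar, v⟫ := by
    have h := two_mul_abs_inner_le (b • (y - xstar)) v (half_pos ht)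
    rw [real_inner_smul_left, norm_smul, Real.norm_eq_abs, mul_pow, sq_abs] at h
    have e : b ^ 2 * ‖y - xstar‖ ^ 2 / (t / 2) = 2 * (b ^ 2 * ‖y - xstar‖ ^ 2 / t) := by
      field_simp
    linarith [neg_abs_le (b * ⟪y - xstar, v⟫)]
  have hU : b ^ 2 * ‖y - xstar‖ ^ 2 / t ≤ b * α / 2 * t ^ (1 - q) / t * ‖y - xstar‖ ^ 2 := by
    have : b ^ 2 ≤ b * α / 2 * t ^ (1 - q) := by nlinarith
    rw [div_mul_eq_mul_div, mul_div_assoc, mul_div_assoc]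
    gcongr
  have hP : 0 ≤ t ^ (p - 1) := Real.rpow_nonneg ht.le _
  have hbracket : 0 ≤ t / 4 * ‖v‖ ^ 2 + b * ⟪y - xstar, v⟫
      + b * α / 2 * t ^ (1 - q) / t * ‖y - xstar‖ ^ 2 := by linarith
  have hX : 0 ≤ a / 2 * ‖y‖ ^ 2 := by positivity
  have : lyapunovEnergy g α q a p b xstar t y v - (t ^ p * (g y - g xstar) + t ^ p / 4 * ‖v‖ ^ 2)
      = t ^ (p - 1) * (t / 4 * ‖v‖ ^ 2 + b * ⟪y - xstar, v⟫
        + b * α / 2 * t ^ (1 - q) / t * ‖y - xstar‖ ^ 2) + a / 2 * ‖y‖ ^ 2 := by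
    simp only [lyapunovEnergy, e1, e3]; ring
  nlinarith [mul_nonneg hP hbracket]

theorem exists_eventually_lyapunovEnergy_le [CompleteSpace H] {g : H → ℝ} {g' : H → H}
    {α q a p t₀ : ℝ} {x x' x'' : ℝ → H} {xstar : H} (hg : ConvexOn ℝ univ g)
    (hg' : ∀ y, HasGradientAt g (g' y) y) (hxstar : ∀ y, g xstar ≤ g y) (hα : 0 < α)
    (ha : 0 ≤ a) (hp : 0 < p) (hq : q < 1) (hpq : p / 2 ≤ q)
    (hx : ∀ t ≥ t₀, HasDerivAt x (x' t) t) (hx' : ∀ t ≥ t₀, HasDerivAt x' (x'' t) t)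
    (hODE : ∀ t ≥ t₀, x'' t + (α / t ^ q) • x' t + g' (x t) + (a / t ^ p) • x t = 0) :
    ∃ M, ∀ᶠ t in atTop, lyapunovEnergy g α q a p (2 * p) xstar t (x t) (x' t) ≤ M := by
  set κ := min p ((1 + q - p) / 2)
  have hκ : 0 < κ := lt_min hp (by linarith)
  have hκq : κ + p < 1 + q := by linarith [min_le_right p ((1 + q - p) / 2)]
  obtain ⟨t₁, ht₁⟩ := eventually_atTop.1
    ((eventually_mul_lyapunovEnergyRate_add_le hg hg' hxstar hα ha hp hq (min_le_left _ _) hκq).and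
      (eventually_gt_atTop (max t₀ 0)))
  have hpos (s : ℝ) (hs : s ≥ t₁) : t₀ < s ∧ 0 < s := max_lt_iff.1 (ht₁ s hs).2
  refine ⟨max (a * p * ‖xstar‖ ^ 2 / κ) (lyapunovEnergy g α q a p (2 * p) xstar t₁ (x t₁) (x' t₁)),
    eventually_atTop.2 ⟨t₁, fun t ht => ?_⟩⟩
  refine le_max_of_mul_deriv_add_le (hpos t₁ le_rfl).2 hκ (fun s hs => ?_)
    (fun s hs => (ht₁ s hs).1 _ _) ht
  have hs₀ : s ≥ t₀ := (hpos s hs).1.le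
  exact hasDerivAt_lyapunovEnergy (hpos s hs).2 (hx s hs₀) (hx' s hs₀) (hg' _) (hODE s hs₀)

end

theorem stmt1_general
    {H : Type*} [NormedAddCommGroup H] [InnerProductSpace ℝ H] [CompleteSpace H]
    (g : H → ℝ) (g' : H → H)
    (hg_convex : ConvexOn ℝ Set.univ g)
    (hg_grad : ∀ y : H, HasGradientAt g (g' y) y)
    (t₀ α q a p : ℝ) (hα : 0 < α) (ha0 : 0 < a) (hp0 : 0 < p)
    (x x' x'' : ℝ → H)
    (hx : ∀ t ≥ t₀, HasDerivAt x (x' t) t)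
    (hx' : ∀ t ≥ t₀, HasDerivAt x' (x'' t) t)
    (hODE : ∀ t ≥ t₀, x'' t + (α / t ^ q) • x' t + g' (x t) + (a / t ^ p) • x t = 0)
    (xstar : H) (hxstar : ∀ y : H, g xstar ≤ g y)
    (hq1 : q < 1)
    (hpq : p / 2 ≤ q) :
    (∃ C > (0:ℝ), ∃ t₁ ≥ t₀, ∀ t ≥ t₁, |g (x t) - g xstar| ≤ C / t ^ (p)) ∧
    (∃ C > (0:ℝ), ∃ t₁ ≥ t₀, ∀ t ≥ t₁, |‖x' t‖| ≤ C / t ^ (p / 2)) := by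
  obtain ⟨M, hM⟩ := exists_eventually_lyapunovEnergy_le hg_convex hg_grad hxstar hα ha0.le hp0
    hq1 hpq hx hx' hODE
  have hdecay : ∀ᶠ t in atTop,
      t ^ p * |g (x t) - g xstar| ≤ |M| ∧ (t ^ (p / 2) * |‖x' t‖|) ^ 2 ≤ 4 * |M| := by
    filter_upwards [hM, eventually_le_lyapunovEnergy (p := p) g xstar hα ha0.le
      (by positivity : 0 ≤ 2 * p) hq1, eventually_gt_atTop 0] with t hME hEbelow ht
    have hE := hEbelow (x t) (x' t)
    have hG : 0 ≤ g (x t) - g xstar := sub_nonneg.2 (hxstar _)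
    have hG' : 0 ≤ t ^ p * (g (x t) - g xstar) := mul_nonneg (Real.rpow_nonneg ht.le p) hG
    have hV : 0 ≤ t ^ p / 4 * ‖x' t‖ ^ 2 := by positivity
    have hhalf : (t ^ (p / 2)) ^ 2 = t ^ p := by rw [sq, ← Real.rpow_add ht, add_halves]
    rw [abs_of_nonneg hG, abs_norm, mul_pow, hhalf]
    constructor <;> linarith [le_abs_self M]
  exact ⟨exists_abs_le_div_rpow_of_eventually t₀ (by positivity : 0 < |M| + 1)
      (hdecay.mono fun t h => by linarith [h.1]),
    exists_abs_le_div_rpow_of_eventually t₀ (by positivity : 0 < √(4 * |M|) + 1)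
      (hdecay.mono fun t h => by linarith [(abs_le.1 (Real.abs_le_sqrt h.2)).2])⟩

theorem stmt1
    {H : Type*} [NormedAddCommGroup H] [InnerProductSpace ℝ H] [CompleteSpace H]
    (g : H → ℝ) (g' : H → H)
    (hg_convex : ConvexOn ℝ Set.univ g)
    (hg_grad : ∀ y : H, HasGradientAt g (g' y) y)
    (hg_lip : ∀ s : Set H, Bornology.IsBounded s → ∃ K : NNReal, LipschitzOnWith K g' s)
    (t₀ α q a p : ℝ) (ht₀ : 0 < t₀) (hα : 0 < α) (hq0 : 0 < q) (ha0 : 0 < a) (hp0 : 0 < p)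
    (x x' x'' : ℝ → H)
    (hx : ∀ t ≥ t₀, HasDerivAt x (x' t) t)
    (hx' : ∀ t ≥ t₀, HasDerivAt x' (x'' t) t)
    (hx''c : ContinuousOn x'' (Set.Ici t₀))
    (hODE : ∀ t ≥ t₀, x'' t + (α / t ^ q) • x' t + g' (x t) + (a / t ^ p) • x t = 0)
    (xstar : H) (hxstar : ∀ y : H, g xstar ≤ g y)
    (hq1 : q < 1) (hp2 : p ≤ 2) (hpa : p = 2 → a ≥ q * (1 - q))
    (hpq : p / 2 ≤ q) :
    (∃ C > (0:ℝ), ∃ t₁ ≥ t₀, ∀ t ≥ t₁, |g (x t) - g xstar| ≤ C / t ^ (p)) ∧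
    (∃ C > (0:ℝ), ∃ t₁ ≥ t₀, ∀ t ≥ t₁, |‖x' t‖| ≤ C / t ^ (p / 2)) :=
  stmt1_general g g' hg_convex hg_grad t₀ α q a p hα ha0 hp0 x x' x'' hx hx' hODE xstar hxstar hq1
    hpq
end

section
/- Assume 0 < q ≤ 1, α > 0, q + 1 < p ≤ 2, with the additional hypothesis a ≥ q(1−q) in case p = 2. Then ‖ẋ(t)‖ = O(1/t^{q}) as t → ∞ and g(x(t)) − g* = O(1/t^{2q}) as t → ∞. -/
open Filter Topology Set

open scoped RealInnerProductSpace

/-!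
Lyapunov argument. With `λ = α / 2` and `u = x - x*`, the energy
`E t = t^{2q} (g x - g*) + (a/2) t^{2q-p} ‖x‖² + ½ ‖λ u + t^q ẋ‖² + (λ/2) (α - λ - q t^{q-1}) ‖u‖²
  + K t^{q+1-p}`
is nonincreasing for large `t`: along the ODE the cross terms `⟪∇g, ẋ⟫`, `⟪x, ẋ⟫`, `⟪u, ẋ⟫`
cancel, the term `-λ t^q ⟪∇g x, u⟫` is controlled by convexity, and `K = a λ ‖x*‖² / (2 (p-q-1))`
is chosen so that the derivative of `K t^{q+1-p}` absorbs the `‖x*‖²` produced by the Tikhonov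
term `⟪u, x⟫`. The remaining coefficients are nonpositive once `q t^{q-1} ≤ α/4` and
`q (1-q) t^{p-2} ≤ a`, which holds eventually because `q < 1` and `p ≤ 2`. A bound on `E` then
bounds `t^{2q} (g x - g*)`, and also `‖λ u + t^q ẋ‖` and `‖u‖`, hence `t^q ‖ẋ‖`.
-/

theorem tendsto_rpow_div_rpow_atTop_nhds_zero {r s : ℝ} (h : r < s) :
    Tendsto (fun t : ℝ => t ^ r / t ^ s) atTop (𝓝 0) :=
  (tendsto_rpow_neg_atTop (sub_pos.2 h)).congr' <|
    (eventually_gt_atTop 0).mono fun t ht => by rw [neg_sub, Real.rpow_sub ht]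

theorem eventually_mul_rpow_div_self_le {q c : ℝ} (k : ℝ) (hq : q < 1) (hc : 0 < c) :
    ∀ᶠ t in atTop, k * (t ^ q / t) ≤ c := by
  have hlim := (tendsto_rpow_div_rpow_atTop_nhds_zero hq).const_mul k
  simp only [Real.rpow_one, mul_zero] at hlim
  exact (hlim.eventually_lt_const hc).mono fun _ => le_of_lt

theorem eventually_mul_rpow_div_sq_le {p k a : ℝ} (hp : p ≤ 2) (ha : 0 < a) (hpa : p = 2 → k ≤ a) :
    ∀ᶠ t in atTop, k * (t ^ p / t ^ 2) ≤ a := by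
  rcases hp.eq_or_lt with rfl | hp
  · filter_upwards [eventually_gt_atTop 0] with t ht
    rw [Real.rpow_two, div_self (by positivity), mul_one]
    exact hpa rfl
  · have hlim := (tendsto_rpow_div_rpow_atTop_nhds_zero hp).const_mul k
    simp only [Real.rpow_two, mul_zero] at hlim
    exact (hlim.eventually_lt_const ha).mono fun _ => le_of_lt

theorem Real.hasDerivAt_rpow_const_of_pos {t : ℝ} (ht : 0 < t) (r : ℝ) :
    HasDerivAt (fun s : ℝ => s ^ r) (r * t ^ r / t) t := by
  simpa [Real.rpow_sub_one ht.ne', mul_div_assoc] using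
    Real.hasDerivAt_rpow_const (p := r) (Or.inl ht.ne')

theorem exists_pos_bound_div_rpow {f : ℝ → ℝ} {r t₀ T M : ℝ} (hT₀ : t₀ ≤ T) (hT : 0 < T)
    (h : ∀ t ≥ T, t ^ r * |f t| ≤ M) : ∃ C > 0, ∃ t₁ ≥ t₀, ∀ t ≥ t₁, |f t| ≤ C / t ^ r := by
  refine ⟨max M 1, by positivity, T, hT₀, fun t ht => ?_⟩
  rw [le_div_iff₀ (Real.rpow_pos_of_pos (hT.trans_le ht) r), mul_comm]
  exact (h t ht).trans (le_max_left M 1)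

section

variable {H : Type*} [NormedAddCommGroup H] [InnerProductSpace ℝ H]

theorem HasGradientAt.comp_hasDerivAt [CompleteSpace H] {f : H → ℝ} {f' : H} {γ : ℝ → H}
    {γ' : H} {t : ℝ} (hf : HasGradientAt f f' (γ t)) (hγ : HasDerivAt γ γ' t) :
    HasDerivAt (fun s => f (γ s)) ⟪f', γ'⟫ t := by
  simpa [Function.comp_def] using hf.hasFDerivAt.comp_hasDerivAt t hγ

theorem ConvexOn.sub_le_inner_of_hasGradientAt [CompleteSpace H] {f : H → ℝ}
    (hf : ConvexOn ℝ univ f) {x f' : H} (hx : HasGradientAt f f' x) (y : H) :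
    f x - f y ≤ ⟪f', x - y⟫ := by
  have hconv : ConvexOn ℝ univ (f ∘ AffineMap.lineMap (k := ℝ) y x) := by
    simpa using hf.comp_affineMap (AffineMap.lineMap (k := ℝ) y x)
  have hderiv : HasDerivAt (f ∘ AffineMap.lineMap (k := ℝ) y x) ⟪f', x - y⟫ 1 :=
    HasGradientAt.comp_hasDerivAt (by simpa using hx) AffineMap.hasDerivAt_lineMap
  simpa [slope_def_field] using
    hconv.slope_le_of_hasDerivAt (mem_univ 0) (mem_univ 1) one_pos hderiv

/- Exponents are written through `t ^ q` and `t ^ p` only (`t ^ q / t` for `t ^ (q - 1)`, ...),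
so that `hasDerivAt_energy` reduces to a rational identity in `t`, `t ^ q` and `t ^ p`. -/
noncomputable def energy (g : H → ℝ) (α q a p : ℝ) (x x' : ℝ → H) (xstar : H) (t : ℝ) : ℝ :=
  (t ^ q) ^ 2 * (g (x t) - g xstar) + a / 2 * ((t ^ q) ^ 2 / t ^ p) * ‖x t‖ ^ 2
    + ‖(α / 2) • (x t - xstar) + t ^ q • x' t‖ ^ 2 / 2
    + α / 4 * (α / 2 - q * (t ^ q / t)) * ‖x t - xstar‖ ^ 2
    + a * α * ‖xstar‖ ^ 2 / (4 * (p - q - 1)) * (t * t ^ q / t ^ p)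

noncomputable def energyDeriv (g : H → ℝ) (g' : H → H) (α q a p : ℝ) (x x' : ℝ → H) (xstar : H)
    (t : ℝ) : ℝ :=
  2 * q * ((t ^ q) ^ 2 / t) * (g (x t) - g xstar) - α / 2 * t ^ q * ⟪g' (x t), x t - xstar⟫
    + a / 2 * (t ^ q / t ^ p) * ((2 * q - p) * (t ^ q / t) - α / 2) * ‖x t‖ ^ 2
    + t ^ q * (q * (t ^ q / t) - α / 2) * ‖x' t‖ ^ 2
    + α / 4 * (t ^ q / t ^ p) * (q * (1 - q) * (t ^ p / t ^ 2) - a) * ‖x t - xstar‖ ^ 2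

variable {g : H → ℝ} {g' : H → H} {α q a p t : ℝ} {x x' : ℝ → H} {xstar : H}

theorem energyDeriv_nonpos (ht : 0 < t) (hα : 0 ≤ α) (ha : 0 ≤ a) (hp : 0 ≤ p)
    (hG : 0 ≤ g (x t) - g xstar) (hconv : g (x t) - g xstar ≤ ⟪g' (x t), x t - xstar⟫)
    (h₁ : 2 * q * (t ^ q / t) ≤ α / 2) (h₂ : q * (1 - q) * (t ^ p / t ^ 2) ≤ a) :
    energyDeriv g g' α q a p x x' xstar t ≤ 0 := by
  have hA : 0 < t ^ q := Real.rpow_pos_of_pos ht q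
  have hB : 0 < t ^ q / t ^ p := div_pos hA (Real.rpow_pos_of_pos ht p)
  have hAt : 0 ≤ t ^ q / t := by positivity
  have hvalue : 2 * q * ((t ^ q) ^ 2 / t) * (g (x t) - g xstar)
      - α / 2 * t ^ q * ⟪g' (x t), x t - xstar⟫ ≤ 0 :=
    calc _ ≤ 2 * q * ((t ^ q) ^ 2 / t) * (g (x t) - g xstar)
          - α / 2 * t ^ q * (g (x t) - g xstar) := by gcongr
      _ = t ^ q * (g (x t) - g xstar) * (2 * q * (t ^ q / t) - α / 2) := by ring
      _ ≤ 0 := mul_nonpos_of_nonneg_of_nonpos (by positivity) (by linarith)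
  have hregular : a / 2 * (t ^ q / t ^ p) * ((2 * q - p) * (t ^ q / t) - α / 2) * ‖x t‖ ^ 2 ≤ 0 :=
    mul_nonpos_of_nonpos_of_nonneg (mul_nonpos_of_nonneg_of_nonpos (by positivity)
      (by nlinarith [mul_nonneg hp hAt])) (sq_nonneg _)
  have hvel : t ^ q * (q * (t ^ q / t) - α / 2) * ‖x' t‖ ^ 2 ≤ 0 :=
    mul_nonpos_of_nonpos_of_nonneg (mul_nonpos_of_nonneg_of_nonpos hA.le (by linarith))
      (sq_nonneg _)
  have hdist : α / 4 * (t ^ q / t ^ p) * (q * (1 - q) * (t ^ p / t ^ 2) - a)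
      * ‖x t - xstar‖ ^ 2 ≤ 0 :=
    mul_nonpos_of_nonpos_of_nonneg (mul_nonpos_of_nonneg_of_nonpos (by positivity)
      (by linarith)) (sq_nonneg _)
  unfold energyDeriv
  linarith

theorem le_energy (ht : 0 < t) (hα : 0 ≤ α) (ha : 0 ≤ a) (hpq : q + 1 < p)
    (h₁ : 2 * q * (t ^ q / t) ≤ α / 2) :
    (t ^ q) ^ 2 * (g (x t) - g xstar) + ‖(α / 2) • (x t - xstar) + t ^ q • x' t‖ ^ 2 / 2
      + α ^ 2 / 16 * ‖x t - xstar‖ ^ 2 ≤ energy g α q a p x x' xstar t := by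
  have hK : 0 ≤ a * α * ‖xstar‖ ^ 2 / (4 * (p - q - 1)) * (t * t ^ q / t ^ p) :=
    mul_nonneg (div_nonneg (by positivity) (by linarith)) (by positivity)
  have hdist : α ^ 2 / 16 * ‖x t - xstar‖ ^ 2
      ≤ α / 4 * (α / 2 - q * (t ^ q / t)) * ‖x t - xstar‖ ^ 2 := by
    gcongr
    nlinarith
  have hx : 0 ≤ a / 2 * ((t ^ q) ^ 2 / t ^ p) * ‖x t‖ ^ 2 := by positivity
  unfold energy
  linarith

theorem hasDerivAt_energy [CompleteSpace H] {x'' : ℝ → H} (ht : 0 < t) (hpq : p - q - 1 ≠ 0)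
    (hg : HasGradientAt g (g' (x t)) (x t))
    (hx : HasDerivAt x (x' t) t) (hx' : HasDerivAt x' (x'' t) t)
    (hode : x'' t + (α / t ^ q) • x' t + g' (x t) + (a / t ^ p) • x t = 0) :
    HasDerivAt (energy g α q a p x x' xstar) (energyDeriv g g' α q a p x x' xstar t) t := by
  have hq := Real.hasDerivAt_rpow_const_of_pos ht q
  have hp := Real.hasDerivAt_rpow_const_of_pos ht p
  have hu : HasDerivAt (fun s => x s - xstar) (x' t) t := hx.sub_const xstar
  have hE₁ := (hq.pow 2).mul ((hg.comp_hasDerivAt hx).sub_const (g xstar))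
  have hE₂ :=
    (((hq.pow 2).div hp (Real.rpow_pos_of_pos ht p).ne').const_mul (a / 2)).mul hx.norm_sq
  have hE₃ := (((hu.const_smul (α / 2)).add (hq.smul hx')).norm_sq).div_const 2
  have hE₄ := ((((hq.div (hasDerivAt_id t) ht.ne').const_mul q).const_sub (α / 2)).const_mul
    (α / 4)).mul hu.norm_sq
  have hE₅ := (((hasDerivAt_id t).mul hq).div hp (Real.rpow_pos_of_pos ht p).ne').const_mul
    (a * α * ‖xstar‖ ^ 2 / (4 * (p - q - 1)))
  refine ((((hE₁.add hE₂).add hE₃).add hE₄).add hE₅).congr_deriv ?_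
  have hx'' : x'' t = -((α / t ^ q) • x' t + g' (x t) + (a / t ^ p) • x t) :=
    eq_neg_of_add_eq_zero_left (by rw [← hode]; abel)
  have htq : t ^ q ≠ 0 := (Real.rpow_pos_of_pos ht q).ne'
  have htp : t ^ p ≠ 0 := (Real.rpow_pos_of_pos ht p).ne'
  simp only [energyDeriv, hx'', ← real_inner_self_eq_norm_sq, inner_add_left, inner_add_right,
    inner_sub_left, inner_sub_right, inner_neg_right, real_inner_smul_left,
    real_inner_smul_right, real_inner_comm (x' t) (x t), real_inner_comm xstar (x t),
    real_inner_comm (x' t) (g' (x t)), real_inner_comm (x t) (g' (x t)),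
    real_inner_comm xstar (g' (x t)), id, Pi.pow_apply, Pi.mul_apply, Pi.div_apply, Pi.add_apply,
    Pi.smul_apply, Pi.smul_apply']
  field_simp
  ring

theorem rpow_mul_abs_sub_le_of_energy_le {M : ℝ} (ht : 0 < t) (hα : 0 ≤ α) (ha : 0 ≤ a)
    (hpq : q + 1 < p) (hG : 0 ≤ g (x t) - g xstar) (h₁ : 2 * q * (t ^ q / t) ≤ α / 2)
    (hE : energy g α q a p x x' xstar t ≤ M) :
    t ^ (2 * q) * |g (x t) - g xstar| ≤ M := by
  have hbound := (le_energy (x' := x') ht hα ha hpq h₁).trans hE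
  rw [abs_of_nonneg hG, mul_comm 2 q, Real.rpow_mul ht.le, Real.rpow_two]
  nlinarith [sq_nonneg ‖(α / 2) • (x t - xstar) + t ^ q • x' t‖, sq_nonneg ‖x t - xstar‖]

theorem rpow_mul_norm_le_of_energy_le {M : ℝ} (ht : 0 < t) (hα : 0 ≤ α) (ha : 0 ≤ a)
    (hpq : q + 1 < p) (hG : 0 ≤ g (x t) - g xstar) (h₁ : 2 * q * (t ^ q / t) ≤ α / 2)
    (hE : energy g α q a p x x' xstar t ≤ M) :
    t ^ q * ‖x' t‖ ≤ √(8 * M) := by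
  set v := (α / 2) • (x t - xstar) + t ^ q • x' t
  have hbound := (le_energy (x' := x') ht hα ha hpq h₁).trans hE
  have hsplit : t ^ q • x' t = v - (α / 2) • (x t - xstar) := by simp only [v]; abel
  have hnorm : t ^ q * ‖x' t‖ ≤ ‖v‖ + α / 2 * ‖x t - xstar‖ :=
    calc t ^ q * ‖x' t‖ = ‖t ^ q • x' t‖ := by
          rw [norm_smul, Real.norm_of_nonneg (Real.rpow_nonneg ht.le q)]
      _ ≤ ‖v‖ + ‖(α / 2) • (x t - xstar)‖ := hsplit ▸ norm_sub_le _ _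
      _ = ‖v‖ + α / 2 * ‖x t - xstar‖ := by rw [norm_smul, Real.norm_of_nonneg (by positivity)]
  refine (le_abs_self _).trans (Real.abs_le_sqrt ?_)
  have hG' : 0 ≤ (t ^ q) ^ 2 * (g (x t) - g xstar) := by positivity
  calc (t ^ q * ‖x' t‖) ^ 2 ≤ (‖v‖ + α / 2 * ‖x t - xstar‖) ^ 2 := by
        gcongr
    _ ≤ 4 * (‖v‖ ^ 2 / 2) + 8 * (α ^ 2 / 16 * ‖x t - xstar‖ ^ 2) := by
        nlinarith [sq_nonneg (‖v‖ - α / 2 * ‖x t - xstar‖)]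
    _ ≤ 8 * M := by nlinarith [sq_nonneg ‖v‖, sq_nonneg ‖x t - xstar‖]

theorem antitoneOn_energy [CompleteSpace H] {x'' : ℝ → H} {T : ℝ} (hT : 0 < T)
    (hg_convex : ConvexOn ℝ univ g) (hg_grad : ∀ y, HasGradientAt g (g' y) y)
    (hx : ∀ t ≥ T, HasDerivAt x (x' t) t) (hx' : ∀ t ≥ T, HasDerivAt x' (x'' t) t)
    (hODE : ∀ t ≥ T, x'' t + (α / t ^ q) • x' t + g' (x t) + (a / t ^ p) • x t = 0)
    (hxstar : ∀ y, g xstar ≤ g y) (hα : 0 ≤ α) (ha : 0 ≤ a) (hp : 0 ≤ p) (hpq : q + 1 < p)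
    (hsmall : ∀ t ≥ T, 2 * q * (t ^ q / t) ≤ α / 2 ∧ q * (1 - q) * (t ^ p / t ^ 2) ≤ a) :
    AntitoneOn (energy g α q a p x x' xstar) (Ici T) := by
  have hderiv : ∀ t ∈ Ici T,
      HasDerivAt (energy g α q a p x x' xstar) (energyDeriv g g' α q a p x x' xstar t) t :=
    fun t ht => hasDerivAt_energy (hT.trans_le ht) (by linarith) (hg_grad _) (hx t ht)
      (hx' t ht) (hODE t ht)
  refine antitoneOn_of_hasDerivWithinAt_nonpos (convex_Ici T)
    (fun t ht => (hderiv t ht).continuousAt.continuousWithinAt)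
    (fun t ht => (hderiv t (interior_subset ht)).hasDerivWithinAt) fun t ht => ?_
  replace ht : T ≤ t := interior_subset ht
  exact energyDeriv_nonpos (hT.trans_le ht) hα ha hp (sub_nonneg.2 (hxstar _))
    (hg_convex.sub_le_inner_of_hasGradientAt (hg_grad _) xstar) (hsmall t ht).1 (hsmall t ht).2

end

theorem stmt7_general
    {H : Type*} [NormedAddCommGroup H] [InnerProductSpace ℝ H] [CompleteSpace H]
    (g : H → ℝ) (g' : H → H)
    (hg_convex : ConvexOn ℝ Set.univ g)
    (hg_grad : ∀ y : H, HasGradientAt g (g' y) y)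
    (t₀ α q a p : ℝ) (hα : 0 < α) (ha0 : 0 < a) (hp0 : 0 < p)
    (x x' x'' : ℝ → H)
    (hx : ∀ t ≥ t₀, HasDerivAt x (x' t) t)
    (hx' : ∀ t ≥ t₀, HasDerivAt x' (x'' t) t)
    (hODE : ∀ t ≥ t₀, x'' t + (α / t ^ q) • x' t + g' (x t) + (a / t ^ p) • x t = 0)
    (xstar : H) (hxstar : ∀ y : H, g xstar ≤ g y)
    (hqp : q + 1 < p) (hp2 : p ≤ 2) (hpa : p = 2 → a ≥ q * (1 - q)) :
    (∃ C > (0:ℝ), ∃ t₁ ≥ t₀, ∀ t ≥ t₁, |‖x' t‖| ≤ C / t ^ (q)) ∧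
    (∃ C > (0:ℝ), ∃ t₁ ≥ t₀, ∀ t ≥ t₁, |g (x t) - g xstar| ≤ C / t ^ (2 * q)) := by
  obtain ⟨T, hlarge⟩ := eventually_atTop.1 <|
    ((eventually_gt_atTop 0).and (eventually_ge_atTop t₀)).and <|
      (eventually_mul_rpow_div_self_le (2 * q) (by linarith : q < 1) (half_pos hα)).and
        (eventually_mul_rpow_div_sq_le hp2 ha0 hpa)
  obtain ⟨⟨hT, hT₀⟩, -⟩ := hlarge T le_rfl
  set M := energy g α q a p x x' xstar T
  have hE : ∀ t ≥ T, energy g α q a p x x' xstar t ≤ M :=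
    fun t ht => antitoneOn_energy hT hg_convex hg_grad
      (fun t ht => hx t (hT₀.trans ht)) (fun t ht => hx' t (hT₀.trans ht))
      (fun t ht => hODE t (hT₀.trans ht)) hxstar hα.le ha0.le hp0.le hqp
      (fun t ht => (hlarge t ht).2) self_mem_Ici ht ht
  refine ⟨exists_pos_bound_div_rpow (M := √(8 * M)) hT₀ hT fun t ht => ?_,
    exists_pos_bound_div_rpow (M := M) hT₀ hT fun t ht => ?_⟩
  · rw [abs_norm]
    exact rpow_mul_norm_le_of_energy_le (hlarge t ht).1.1 hα.le ha0.le hqp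
      (sub_nonneg.2 (hxstar _)) (hlarge t ht).2.1 (hE t ht)
  · exact rpow_mul_abs_sub_le_of_energy_le (hlarge t ht).1.1 hα.le ha0.le hqp
      (sub_nonneg.2 (hxstar _)) (hlarge t ht).2.1 (hE t ht)

theorem stmt7
    {H : Type*} [NormedAddCommGroup H] [InnerProductSpace ℝ H] [CompleteSpace H]
    (g : H → ℝ) (g' : H → H)
    (hg_convex : ConvexOn ℝ Set.univ g)
    (hg_grad : ∀ y : H, HasGradientAt g (g' y) y)
    (hg_lip : ∀ s : Set H, Bornology.IsBounded s → ∃ K : NNReal, LipschitzOnWith K g' s)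
    (t₀ α q a p : ℝ) (ht₀ : 0 < t₀) (hα : 0 < α) (hq0 : 0 < q) (ha0 : 0 < a) (hp0 : 0 < p)
    (x x' x'' : ℝ → H)
    (hx : ∀ t ≥ t₀, HasDerivAt x (x' t) t)
    (hx' : ∀ t ≥ t₀, HasDerivAt x' (x'' t) t)
    (hx''c : ContinuousOn x'' (Set.Ici t₀))
    (hODE : ∀ t ≥ t₀, x'' t + (α / t ^ q) • x' t + g' (x t) + (a / t ^ p) • x t = 0)
    (xstar : H) (hxstar : ∀ y : H, g xstar ≤ g y)
    (hq1 : q ≤ 1) (hqp : q + 1 < p) (hp2 : p ≤ 2) (hpa : p = 2 → a ≥ q * (1 - q)) :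
    (∃ C > (0:ℝ), ∃ t₁ ≥ t₀, ∀ t ≥ t₁, |‖x' t‖| ≤ C / t ^ (q)) ∧
    (∃ C > (0:ℝ), ∃ t₁ ≥ t₀, ∀ t ≥ t₁, |g (x t) - g xstar| ≤ C / t ^ (2 * q)) :=
  stmt7_general g g' hg_convex hg_grad t₀ α q a p hα ha0 hp0 x x' x'' hx hx' hODE xstar hxstar hqp
    hp2 hpa
end

section
/- Assume q = 1, p > 2 and α = 3. Then the trajectory x(t) is bounded, ‖ẋ(t)‖ = O(1/t) as t → ∞, and g(x(t)) − g* = O(1/t^{2}) as t → ∞. -/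
/-!
With `u = x - x*` and `v = u + (t / 2) ẋ`, the energy
`E = t² (g(x) - g*) + 2‖v‖² + a t^(2-p) ‖u‖²` satisfies, thanks to convexity of `g`,
`E' ≤ a t^(1-p) (E + ‖x*‖²)`. Since `t^(1-p)` is integrable at infinity for `p > 2`, this keeps
`E` bounded, which gives `g(x) - g* = O(1/t²)` and a bound on `‖v‖`. As `t² u` has derivative
`2 t v`, the bound on `v` also bounds `u`, and then `(t / 2) ‖ẋ‖ ≤ ‖v‖ + ‖u‖` gives `‖ẋ‖ = O(1/t)`.
-/

open Filter Topology Set MeasureTheory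
open scoped RealInnerProductSpace

theorem ConvexOn.inner_gradient_le_sub {H : Type*} [NormedAddCommGroup H] [InnerProductSpace ℝ H]
    [CompleteSpace H] {g : H → ℝ} {g' s : H} (hg : ConvexOn ℝ univ g) (hs : HasGradientAt g g' s)
    (y : H) : ⟪g', y - s⟫ ≤ g y - g s := by
  have hline : ConvexOn ℝ univ (g ∘ AffineMap.lineMap (k := ℝ) s y) := hg.comp_affineMap _
  have hderiv : HasDerivAt (g ∘ AffineMap.lineMap (k := ℝ) s y) ⟪g', y - s⟫ 0 := by
    rw [← AffineMap.lineMap_apply_zero (k := ℝ) s y] at hs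
    simpa using hs.hasFDerivAt.comp_hasDerivAt (0 : ℝ) AffineMap.hasDerivAt_lineMap
  simpa [slope] using hline.le_slope_of_hasDerivAt (mem_univ 0) (mem_univ 1) one_pos hderiv

theorem antitoneOn_exp_mul_of_hasDerivAt {s : Set ℝ} (hs : Convex ℝ s) {f f' Λ Λ' : ℝ → ℝ}
    (hf : ∀ t ∈ s, HasDerivAt f (f' t) t) (hΛ : ∀ t ∈ s, HasDerivAt Λ (Λ' t) t)
    (hf' : ∀ t ∈ s, f' t ≤ -Λ' t * f t) : AntitoneOn (fun t ↦ Real.exp (Λ t) * f t) s := by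
  have hd : ∀ t ∈ s, HasDerivAt (fun t ↦ Real.exp (Λ t) * f t)
      (Real.exp (Λ t) * (Λ' t * f t + f' t)) t := fun t ht ↦
    ((hΛ t ht).exp.mul (hf t ht)).congr_deriv (by ring)
  refine antitoneOn_of_hasDerivWithinAt_nonpos hs
    (fun t ht ↦ (hd t ht).continuousAt.continuousWithinAt)
    (fun t ht ↦ (hd t (interior_subset ht)).hasDerivWithinAt) fun t ht ↦ ?_
  have := hf' t (interior_subset ht)
  exact mul_nonpos_of_nonneg_of_nonpos (Real.exp_pos _).le (by linarith)

/-- Fencing `t ^ 2 • u t`, whose derivative is `2 t • (u t + (t / 2) • u' t)`. -/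
theorem norm_le_of_norm_add_half_mul_smul_deriv_le {E : Type*} [NormedAddCommGroup E]
    [NormedSpace ℝ E] {u u' : ℝ → E} {t₀ c : ℝ} (ht₀ : 0 < t₀)
    (hu : ∀ t ≥ t₀, HasDerivAt u (u' t) t) (hc : ∀ t ≥ t₀, ‖u t + (t / 2) • u' t‖ ≤ c) :
    ∀ t ≥ t₀, ‖u t‖ ≤ ‖u t₀‖ + c := by
  intro t ht
  have hw : ∀ s ≥ t₀, HasDerivAt (fun s ↦ s ^ 2 • u s) ((2 * s) • (u s + (s / 2) • u' s)) s :=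
    fun s hs ↦ ((hasDerivAt_pow 2 s).smul (hu s hs)).congr_deriv (by module)
  have hB : ∀ s, HasDerivAt (fun s ↦ t₀ ^ 2 * ‖u t₀‖ + c * (s ^ 2 - t₀ ^ 2)) (c * (2 * s)) s :=
    fun s ↦ (((hasDerivAt_pow 2 s).sub_const (t₀ ^ 2)).const_mul c).const_add _ |>.congr_deriv
      (by ring)
  have hfence := image_norm_le_of_norm_deriv_right_le_deriv_boundary (a := t₀) (b := t)
    (fun s hs ↦ (hw s hs.1).continuousAt.continuousWithinAt)
    (fun s hs ↦ (hw s hs.1).hasDerivWithinAt) (by simp [norm_smul]) hB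
    (fun s hs ↦ by
      have hs0 : 0 ≤ s := ht₀.le.trans hs.1
      rw [norm_smul, Real.norm_of_nonneg (by positivity)]
      nlinarith [hc s hs.1]) ⟨ht, le_rfl⟩
  have htpos : 0 < t := ht₀.trans_le ht
  have hc0 : 0 ≤ c := (norm_nonneg _).trans (hc t₀ le_rfl)
  have ht₀t : t₀ ^ 2 ≤ t ^ 2 := pow_le_pow_left₀ ht₀.le ht 2
  rw [norm_smul, Real.norm_of_nonneg (by positivity)] at hfence
  have : t ^ 2 * ‖u t‖ ≤ t ^ 2 * (‖u t₀‖ + c) := by nlinarith [norm_nonneg (u t₀)]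
  exact le_of_mul_le_mul_left this (by positivity)

noncomputable section

namespace TikhonovFlow

variable {H : Type*} [NormedAddCommGroup H] [InnerProductSpace ℝ H]
  (g : H → ℝ) (g' : H → H) (x x' : ℝ → H) (xstar : H) (a p : ℝ)

def energyVec (t : ℝ) : H := (x t - xstar) + (t / 2) • x' t

/-- The Su–Boyd–Candès energy of the `α = 3` dynamics, plus a Tikhonov term. -/
def energy (t : ℝ) : ℝ :=
  t ^ 2 * (g (x t) - g xstar) + 2 * ‖energyVec x x' xstar t‖ ^ 2 +
    a * t ^ (2 - p) * ‖x t - xstar‖ ^ 2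

def energyDeriv (t : ℝ) : ℝ :=
  -(2 * t) * (⟪g' (x t), x t - xstar⟫ - (g (x t) - g xstar)) +
    a * t ^ (1 - p) * (-p * ‖x t - xstar‖ ^ 2 - 2 * ⟪x t - xstar, xstar⟫ +
      t * ⟪x t - xstar, x' t⟫ - t * ⟪x' t, xstar⟫)

variable {g g' x x' xstar a p}

theorem hasDerivAt_energyVec {x'' : ℝ → H} {t : ℝ} (ht : t ≠ 0) (hx : HasDerivAt x (x' t) t)
    (hx' : HasDerivAt x' (x'' t) t)
    (hODE : x'' t + (3 / t) • x' t + g' (x t) + (a / t ^ p) • x t = 0) :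
    HasDerivAt (energyVec x x' xstar) (-(t / 2) • (g' (x t) + (a / t ^ p) • x t)) t := by
  have h : HasDerivAt (energyVec x x' xstar) (x' t + ((t / 2) • x'' t + (1 / 2 : ℝ) • x' t)) t :=
    (hx.sub_const xstar).add (((hasDerivAt_id t).div_const 2).smul hx')
  have hx'' : x'' t = -(3 / t) • x' t - g' (x t) - (a / t ^ p) • x t := by
    rw [← sub_eq_zero, ← hODE]; module
  refine h.congr_deriv ?_
  rw [hx'']
  match_scalars <;> field_simp; ring

theorem hasDerivAt_energy [CompleteSpace H] {x'' : ℝ → H} {t : ℝ} (ht : 0 < t)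
    (hx : HasDerivAt x (x' t) t) (hx' : HasDerivAt x' (x'' t) t)
    (hgrad : HasGradientAt g (g' (x t)) (x t))
    (hODE : x'' t + (3 / t) • x' t + g' (x t) + (a / t ^ p) • x t = 0) :
    HasDerivAt (energy g x x' xstar a p) (energyDeriv g g' x x' xstar a p t) t := by
  have hgx : HasDerivAt (g ∘ x) ⟪g' (x t), x' t⟫ t := by
    simpa using hgrad.hasFDerivAt.comp_hasDerivAt t hx
  have h1 := (hasDerivAt_pow 2 t).mul (hgx.sub_const (g xstar))
  have h2 := ((hasDerivAt_energyVec (xstar := xstar) ht.ne' hx hx' hODE).norm_sq).const_mul 2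
  have h3 := ((Real.hasDerivAt_rpow_const (p := 2 - p) (Or.inl ht.ne')).const_mul a).mul
    (hx.sub_const xstar).norm_sq
  refine ((h1.add h2).add h3).congr_deriv ?_
  have hpow : t ^ (2 - p) = t ^ (1 - p) * t := by
    rw [show 2 - p = (1 - p) + 1 by ring, Real.rpow_add_one ht.ne']
  have hdiv : a / t ^ p = a * t ^ (1 - p) / t := by
    rw [Real.rpow_sub ht, Real.rpow_one]; field_simp
  simp only [energyDeriv, energyVec, hpow, hdiv, show 2 - p - 1 = 1 - p by ring,
    ← real_inner_self_eq_norm_sq, inner_add_left, inner_add_right, inner_sub_left,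
    inner_sub_right, real_inner_smul_right, real_inner_comm, Function.comp]
  field_simp
  ring

theorem sq_mul_sub_le_energy {t : ℝ} (ht : 0 ≤ t) (ha : 0 ≤ a) :
    t ^ 2 * (g (x t) - g xstar) ≤ energy g x x' xstar a p t := by
  have : 0 ≤ a * t ^ (2 - p) * ‖x t - xstar‖ ^ 2 := by positivity
  unfold energy
  nlinarith [sq_nonneg ‖energyVec x x' xstar t‖]

theorem two_mul_norm_energyVec_sq_le_energy {t : ℝ} (ht : 0 ≤ t) (ha : 0 ≤ a)
    (hmin : g xstar ≤ g (x t)) :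
    2 * ‖energyVec x x' xstar t‖ ^ 2 ≤ energy g x x' xstar a p t := by
  have : 0 ≤ a * t ^ (2 - p) * ‖x t - xstar‖ ^ 2 := by positivity
  have : 0 ≤ t ^ 2 * (g (x t) - g xstar) := mul_nonneg (sq_nonneg t) (sub_nonneg.2 hmin)
  unfold energy
  linarith

theorem energy_nonneg {t : ℝ} (ht : 0 ≤ t) (ha : 0 ≤ a) (hmin : g xstar ≤ g (x t)) :
    0 ≤ energy g x x' xstar a p t :=
  (by positivity : (0 : ℝ) ≤ 2 * ‖energyVec x x' xstar t‖ ^ 2).trans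
    (two_mul_norm_energyVec_sq_le_energy ht ha hmin)

theorem energyDeriv_le [CompleteSpace H] {t : ℝ} (hg : ConvexOn ℝ univ g)
    (hgrad : HasGradientAt g (g' (x t)) (x t)) (hmin : g xstar ≤ g (x t)) (ht : 0 ≤ t)
    (ha : 0 ≤ a) (hp : -1 ≤ p) :
    energyDeriv g g' x x' xstar a p t ≤
      a * t ^ (1 - p) * (energy g x x' xstar a p t + ‖xstar‖ ^ 2) := by
  set u := x t - xstar
  have hgap : g (x t) - g xstar ≤ ⟪g' (x t), u⟫ := by
    have := hg.inner_gradient_le_sub hgrad xstar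
    rw [← neg_sub, inner_neg_right] at this
    linarith
  -- the energy dominates the Tikhonov part of `E'` up to a sum of squares
  have hsos : energy g x x' xstar a p t + ‖xstar‖ ^ 2 -
      (-p * ‖u‖ ^ 2 - 2 * ⟪u, xstar⟫ + t * ⟪u, x' t⟫ - t * ⟪x' t, xstar⟫) =
      t ^ 2 * (g (x t) - g xstar) + a * t ^ (2 - p) * ‖u‖ ^ 2 +
        ‖u + (t / 2) • x' t + xstar‖ ^ 2 + (p + 1) * ‖u‖ ^ 2 + (t / 2) ^ 2 * ‖x' t‖ ^ 2 := by
    simp only [energy, energyVec, ← real_inner_self_eq_norm_sq, inner_add_left, inner_add_right,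
      real_inner_smul_right, real_inner_comm, u]
    ring
  have hrest : -p * ‖u‖ ^ 2 - 2 * ⟪u, xstar⟫ + t * ⟪u, x' t⟫ - t * ⟪x' t, xstar⟫ ≤
      energy g x x' xstar a p t + ‖xstar‖ ^ 2 := by
    have : 0 ≤ t ^ 2 * (g (x t) - g xstar) := mul_nonneg (sq_nonneg t) (sub_nonneg.2 hmin)
    have : 0 ≤ a * t ^ (2 - p) * ‖u‖ ^ 2 := by positivity
    have : 0 ≤ (p + 1) * ‖u‖ ^ 2 := mul_nonneg (by linarith) (sq_nonneg _)
    nlinarith [sq_nonneg ‖u + (t / 2) • x' t + xstar‖, sq_nonneg ((t / 2) * ‖x' t‖)]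
  have hc : 0 ≤ a * t ^ (1 - p) := by positivity
  unfold energyDeriv
  nlinarith [mul_le_mul_of_nonneg_left hrest hc]

theorem energy_le [CompleteSpace H] {x'' : ℝ → H} {t₀ : ℝ} (hg : ConvexOn ℝ univ g)
    (hgrad : ∀ y, HasGradientAt g (g' y) y) (hmin : ∀ y, g xstar ≤ g y) (ht₀ : 0 < t₀)
    (ha : 0 ≤ a) (hp : 2 < p)
    (hx : ∀ t ≥ t₀, HasDerivAt x (x' t) t) (hx' : ∀ t ≥ t₀, HasDerivAt x' (x'' t) t)
    (hODE : ∀ t ≥ t₀, x'' t + (3 / t) • x' t + g' (x t) + (a / t ^ p) • x t = 0) :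
    ∀ t ≥ t₀, energy g x x' xstar a p t ≤
      Real.exp (a * t₀ ^ (2 - p) / (p - 2)) * (energy g x x' xstar a p t₀ + ‖xstar‖ ^ 2) := by
  intro t ht
  have hpos : ∀ s ∈ Ici t₀, 0 < s := fun s hs ↦ ht₀.trans_le hs
  have hp2 : p - 2 ≠ 0 := by linarith
  -- `exp (a t ^ (2 - p) / (p - 2))` is an integrating factor for `E' ≤ a t ^ (1 - p) (E + ‖x*‖²)`
  have hΛ : ∀ s ∈ Ici t₀, HasDerivAt (fun s ↦ a * s ^ (2 - p) / (p - 2)) (-(a * s ^ (1 - p))) s :=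
    fun s hs ↦ ((Real.hasDerivAt_rpow_const (p := 2 - p) (Or.inl (hpos s hs).ne')).const_mul a
      |>.div_const (p - 2)).congr_deriv (by rw [show 2 - p - 1 = 1 - p by ring]; field_simp; ring)
  have hanti := antitoneOn_exp_mul_of_hasDerivAt (convex_Ici t₀)
    (fun s hs ↦ (hasDerivAt_energy (hpos s hs) (hx s hs) (hx' s hs) (hgrad _) (hODE s hs)).add_const
      (‖xstar‖ ^ 2)) hΛ
    (fun s hs ↦ by
      rw [neg_neg]
      exact energyDeriv_le hg (hgrad (x s)) (hmin (x s)) (hpos s hs).le ha (by linarith))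
  have hE := energy_nonneg (x' := x') (p := p) (hpos t ht).le ha (hmin (x t))
  have hexp : 1 ≤ Real.exp (a * t ^ (2 - p) / (p - 2)) :=
    Real.one_le_exp (div_nonneg (by have := hpos t ht; positivity) (by linarith))
  calc energy g x x' xstar a p t ≤ energy g x x' xstar a p t + ‖xstar‖ ^ 2 :=
        le_add_of_nonneg_right (sq_nonneg _)
    _ ≤ Real.exp (a * t ^ (2 - p) / (p - 2)) * (energy g x x' xstar a p t + ‖xstar‖ ^ 2) :=
      le_mul_of_one_le_left (by positivity) hexp
    _ ≤ _ := hanti self_mem_Ici ht ht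

theorem mul_norm_velocity_le {t : ℝ} (ht : 0 ≤ t) :
    t * ‖x' t‖ ≤ 2 * (‖energyVec x x' xstar t‖ + ‖x t - xstar‖) := by
  have h : (t / 2) • x' t = energyVec x x' xstar t - (x t - xstar) := by
    simp [energyVec]
  have := norm_sub_le (energyVec x x' xstar t) (x t - xstar)
  rw [← h, norm_smul, Real.norm_of_nonneg (by positivity)] at this
  linarith

end TikhonovFlow

end

theorem stmt8_general
    {H : Type*} [NormedAddCommGroup H] [InnerProductSpace ℝ H] [CompleteSpace H]
    (g : H → ℝ) (g' : H → H)
    (hg_convex : ConvexOn ℝ Set.univ g)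
    (hg_grad : ∀ y : H, HasGradientAt g (g' y) y)
    (t₀ α q a p : ℝ) (ht₀ : 0 < t₀) (ha0 : 0 < a)
    (x x' x'' : ℝ → H)
    (hx : ∀ t ≥ t₀, HasDerivAt x (x' t) t)
    (hx' : ∀ t ≥ t₀, HasDerivAt x' (x'' t) t)
    (hODE : ∀ t ≥ t₀, x'' t + (α / t ^ q) • x' t + g' (x t) + (a / t ^ p) • x t = 0)
    (xstar : H) (hxstar : ∀ y : H, g xstar ≤ g y)
    (hq1 : q = 1) (hp2 : p > 2) (hα3 : α = 3) :
    (∃ M > (0:ℝ), ∀ t ≥ t₀, ‖x t‖ ≤ M) ∧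
    (∃ C > (0:ℝ), ∃ t₁ ≥ t₀, ∀ t ≥ t₁, |‖x' t‖| ≤ C / t ^ ((1:ℝ))) ∧
    (∃ C > (0:ℝ), ∃ t₁ ≥ t₀, ∀ t ≥ t₁, |g (x t) - g xstar| ≤ C / t ^ ((2:ℝ))) := by
  subst hq1 hα3
  have hODE' : ∀ t ≥ t₀, x'' t + (3 / t) • x' t + g' (x t) + (a / t ^ p) • x t = 0 :=
    fun t ht ↦ by simpa only [Real.rpow_one] using hODE t ht
  have hpos : ∀ t ≥ t₀, 0 < t := fun t ht ↦ ht₀.trans_le ht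
  set C := Real.exp (a * t₀ ^ (2 - p) / (p - 2)) *
    (TikhonovFlow.energy g x x' xstar a p t₀ + ‖xstar‖ ^ 2)
  have hE : ∀ t ≥ t₀, TikhonovFlow.energy g x x' xstar a p t ≤ C :=
    TikhonovFlow.energy_le hg_convex hg_grad hxstar ht₀ ha0.le hp2 hx hx' hODE'
  have hC : 0 ≤ C :=
    (TikhonovFlow.energy_nonneg ht₀.le ha0.le (hxstar (x t₀))).trans (hE t₀ le_rfl)
  have hvec : ∀ t ≥ t₀, ‖TikhonovFlow.energyVec x x' xstar t‖ ≤ √(C / 2) := fun t ht ↦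
    Real.le_sqrt_of_sq_le <| by
      linarith [(TikhonovFlow.two_mul_norm_energyVec_sq_le_energy (hpos t ht).le ha0.le
        (hxstar (x t))).trans (hE t ht)]
  have hdist := norm_le_of_norm_add_half_mul_smul_deriv_le ht₀
    (fun t ht ↦ (hx t ht).sub_const xstar) hvec
  refine ⟨⟨‖x t₀ - xstar‖ + √(C / 2) + ‖xstar‖ + 1, by positivity, fun t ht ↦ ?_⟩,
    ⟨2 * (2 * √(C / 2) + ‖x t₀ - xstar‖) + 1, by positivity, t₀, le_rfl, fun t ht ↦ ?_⟩,
    ⟨C + 1, by positivity, t₀, le_rfl, fun t ht ↦ ?_⟩⟩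
  · linarith [norm_le_norm_sub_add (x t) xstar, hdist t ht]
  · rw [Real.rpow_one, abs_of_nonneg (norm_nonneg _), le_div_iff₀ (hpos t ht)]
    linarith [TikhonovFlow.mul_norm_velocity_le (x := x) (x' := x') (xstar := xstar) (hpos t ht).le,
      hvec t ht, hdist t ht]
  · rw [Real.rpow_two, abs_of_nonneg (sub_nonneg.2 (hxstar _)), le_div_iff₀ (pow_pos (hpos t ht) 2)]
    linarith [(TikhonovFlow.sq_mul_sub_le_energy (hpos t ht).le ha0.le).trans (hE t ht)]

theorem stmt8
    {H : Type*} [NormedAddCommGroup H] [InnerProductSpace ℝ H] [CompleteSpace H]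
    (g : H → ℝ) (g' : H → H)
    (hg_convex : ConvexOn ℝ Set.univ g)
    (hg_grad : ∀ y : H, HasGradientAt g (g' y) y)
    (hg_lip : ∀ s : Set H, Bornology.IsBounded s → ∃ K : NNReal, LipschitzOnWith K g' s)
    (t₀ α q a p : ℝ) (ht₀ : 0 < t₀) (hα : 0 < α) (hq0 : 0 < q) (ha0 : 0 < a) (hp0 : 0 < p)
    (x x' x'' : ℝ → H)
    (hx : ∀ t ≥ t₀, HasDerivAt x (x' t) t)
    (hx' : ∀ t ≥ t₀, HasDerivAt x' (x'' t) t)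
    (hx''c : ContinuousOn x'' (Set.Ici t₀))
    (hODE : ∀ t ≥ t₀, x'' t + (α / t ^ q) • x' t + g' (x t) + (a / t ^ p) • x t = 0)
    (xstar : H) (hxstar : ∀ y : H, g xstar ≤ g y)
    (hq1 : q = 1) (hp2 : p > 2) (hα3 : α = 3) :
    (∃ M > (0:ℝ), ∀ t ≥ t₀, ‖x t‖ ≤ M) ∧
    (∃ C > (0:ℝ), ∃ t₁ ≥ t₀, ∀ t ≥ t₁, |‖x' t‖| ≤ C / t ^ ((1:ℝ))) ∧
    (∃ C > (0:ℝ), ∃ t₁ ≥ t₀, ∀ t ≥ t₁, |g (x t) - g xstar| ≤ C / t ^ ((2:ℝ))) :=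
  stmt8_general g g' hg_convex hg_grad t₀ α q a p ht₀ ha0 x x' x'' hx hx' hODE xstar hxstar hq1 hp2
    hα3
end

section
/- Assume 0 < q < 1, α > 0 and (3q+1)/2 ≤ p ≤ (4q+2)/3 (note (4q+2)/3 < q+1). Then g(x(t)) − g* = O(1/t^{p}) as t → ∞. -/
open Filter Topology Set
open scoped RealInnerProductSpace

/-!
Lyapunov argument. With `u = x - x⋆` consider
`E t = t^p (g x - g⋆) + a/2 (‖x‖² - ‖x⋆‖²) + t^(p-2)/2 ‖(p+1) u + t ẋ‖² + ξ t/2 ‖u‖²`,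
`ξ t = (p+1) (α t^(p-q-1) - (p+2) t^(p-2))`. The weight `ξ` is chosen so that all cross terms
`⟪u, ẋ⟫` cancel in `d/dt (t E)`, and the Tikhonov term contributes
`-a (p+1) ⟪u, x⟫ = -a (p+1)/2 (‖u‖² + ‖x‖² - ‖x⋆‖²)`. What remains is `(p+1) t^p` times
`g x - g⋆ - ⟪∇g x, u⟫ ≤ 0`, the constant `a p/2 ‖x⋆‖²`, and multiples of `‖ẋ‖²` and `‖u‖²` whose
coefficients are eventually nonpositive because `q < 1` and `p < q + 1`. So `t E t` grows at most
linearly and `E` is bounded above; as `ξ ≥ 0` eventually, `E t ≥ t^p (g x - g⋆) - a/2 ‖x⋆‖²`.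
-/

theorem ConvexOn.add_inner_sub_le_of_hasGradientAt {H : Type*} [NormedAddCommGroup H]
    [InnerProductSpace ℝ H] [CompleteSpace H] {g : H → ℝ} {v y : H}
    (hg : ConvexOn ℝ univ g) (hv : HasGradientAt g v y) (z : H) :
    g y + ⟪v, z - y⟫ ≤ g z := by
  have hline : HasDerivAt (g ∘ AffineMap.lineMap (k := ℝ) y z) ⟪v, z - y⟫ (0 : ℝ) := by
    have := hv.hasFDerivAt
    rw [← AffineMap.lineMap_apply_zero y z (k := ℝ)] at this
    simpa using this.comp_hasDerivAt (0 : ℝ) AffineMap.hasDerivAt_lineMap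
  have := (hg.comp_affineMap (AffineMap.lineMap y z)).le_slope_of_hasDerivAt
    (mem_univ 0) (mem_univ 1) zero_lt_one hline
  simp only [slope_def_field, Function.comp_apply, AffineMap.lineMap_apply_one,
    AffineMap.lineMap_apply_zero, sub_zero, div_one] at this
  linarith

theorem norm_add_sq_le {E : Type*} [SeminormedAddCommGroup E] (u v : E) :
    ‖u + v‖ ^ 2 ≤ 2 * (‖u‖ ^ 2 + ‖v‖ ^ 2) :=
  (pow_le_pow_left₀ (norm_nonneg _) (norm_add_le u v) 2).trans add_sq_le

theorem le_abs_add_of_hasDerivAt_mul_le {f f' : ℝ → ℝ} {t₁ C : ℝ} (ht₁ : 0 < t₁) (hC : 0 ≤ C)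
    (hf : ∀ t ≥ t₁, HasDerivAt (fun s => s * f s) (f' t) t) (hf' : ∀ t ≥ t₁, f' t ≤ C)
    {t : ℝ} (ht : t₁ ≤ t) : f t ≤ |f t₁| + C := by
  have hgrowth : t * f t - t₁ * f t₁ ≤ C * (t - t₁) := by
    refine (convex_Ici t₁).image_sub_le_mul_sub_of_deriv_le
      (fun s hs => (hf s hs).continuousAt.continuousWithinAt)
      (fun s hs => (hf s (interior_subset hs)).differentiableAt.differentiableWithinAt)
      (fun s hs => (hf s (interior_subset hs)).deriv ▸ hf' s (interior_subset hs))
      t₁ self_mem_Ici t ht ht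
  have ht0 : 0 < t := ht₁.trans_le ht
  rw [← mul_le_mul_iff_of_pos_left ht0]
  nlinarith [le_abs_self (f t₁), abs_nonneg (f t₁)]

theorem eventually_tikhonov_rate_conditions {α q a p : ℝ} (hα : 0 < α) (ha : 0 < a)
    (hq : q < 1) (hpq : p < q + 1) (hp : -1 < p) :
    ∀ᶠ t in atTop, p + 2 + |p - 1| ≤ α * t ^ (1 - q) ∧
      (p + 1) / 2 * (α * (p - q) * t ^ (p - q - 1) - (p - 1) * (p + 2) * t ^ (p - 2))
        + |p - 1| * (p + 1) ^ 2 * t ^ (p - 2) ≤ a * (p + 1) / 2 := by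
  have hdecay {r : ℝ} (hr : r < 0) : Tendsto (fun t : ℝ => t ^ r) atTop (𝓝 0) := by
    simpa using tendsto_rpow_neg_atTop (neg_pos.2 hr)
  refine Eventually.and ?_ ?_
  · exact ((tendsto_rpow_atTop (by linarith)).const_mul_atTop hα).eventually_ge_atTop _
  · have hlim := (((hdecay (by linarith : p - q - 1 < 0)).const_mul (α * (p - q))).sub
      ((hdecay (by linarith : p - 2 < 0)).const_mul ((p - 1) * (p + 2)))).const_mul ((p + 1) / 2)
      |>.add ((hdecay (by linarith : p - 2 < 0)).const_mul (|p - 1| * (p + 1) ^ 2))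
    simp only [mul_zero, sub_zero, add_zero] at hlim
    exact hlim.eventually_le_const (by nlinarith)

section TikhonovEnergy

variable {H : Type*} [NormedAddCommGroup H] [InnerProductSpace ℝ H]

noncomputable def tikhonovEnergy (g : H → ℝ) (xstar : H) (α q a p : ℝ) (x x' : ℝ → H)
    (t : ℝ) : ℝ :=
  t ^ p * (g (x t) - g xstar) + a / 2 * (‖x t‖ ^ 2 - ‖xstar‖ ^ 2)
    + t ^ (p - 2) / 2 * ‖(p + 1) • (x t - xstar) + t • x' t‖ ^ 2
    + (p + 1) / 2 * (α * t ^ (p - q - 1) - (p + 2) * t ^ (p - 2)) * ‖x t - xstar‖ ^ 2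

noncomputable def tikhonovEnergyRate (α q a p t F : ℝ) (X V G xstar : H) : ℝ :=
  (p + 1) * t ^ p * (F - ⟪G, X - xstar⟫) - a * p / 2 * (‖X‖ ^ 2 - ‖xstar‖ ^ 2)
    + (p - 1) / 2 * t ^ (p - 2) * ‖(p + 1) • (X - xstar) + t • V‖ ^ 2
    + (p + 2 - α * t ^ (1 - q)) * t ^ p * ‖V‖ ^ 2
    + ((p + 1) / 2 * (α * (p - q) * t ^ (p - q - 1) - (p - 1) * (p + 2) * t ^ (p - 2))
        - a * (p + 1) / 2) * ‖X - xstar‖ ^ 2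

theorem tikhonovEnergy_ge {g : H → ℝ} {xstar : H} {α q a p t : ℝ} {x x' : ℝ → H} (ha : 0 ≤ a)
    (hp : 0 ≤ p + 1) (ht : 0 < t) (hξ : p + 2 ≤ α * t ^ (1 - q)) :
    t ^ p * (g (x t) - g xstar) - a / 2 * ‖xstar‖ ^ 2 ≤ tikhonovEnergy g xstar α q a p x x' t := by
  have hweight : 0 ≤ (p + 1) / 2 * (α * t ^ (p - q - 1) - (p + 2) * t ^ (p - 2)) := by
    have hsplit : t ^ (p - q - 1) = t ^ (p - 2) * t ^ (1 - q) := by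
      rw [← Real.rpow_add ht]; ring_nf
    have : 0 ≤ α * t ^ (1 - q) - (p + 2) := by linarith
    rw [hsplit, show α * (t ^ (p - 2) * t ^ (1 - q)) - (p + 2) * t ^ (p - 2)
      = t ^ (p - 2) * (α * t ^ (1 - q) - (p + 2)) by ring]
    positivity
  have hP2 := Real.rpow_nonneg ht.le (p - 2)
  unfold tikhonovEnergy
  linarith [mul_nonneg hweight (sq_nonneg ‖x t - xstar‖), mul_nonneg ha (sq_nonneg ‖x t‖),
    mul_nonneg hP2 (sq_nonneg ‖(p + 1) • (x t - xstar) + t • x' t‖)]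

theorem tikhonovEnergyRate_le {α q a p t F : ℝ} {X V G xstar : H} (ha : 0 ≤ a) (hp : 0 ≤ p)
    (ht : 0 < t) (hF : F ≤ ⟪G, X - xstar⟫) (hV : p + 2 + |p - 1| ≤ α * t ^ (1 - q))
    (hU : (p + 1) / 2 * (α * (p - q) * t ^ (p - q - 1) - (p - 1) * (p + 2) * t ^ (p - 2))
      + |p - 1| * (p + 1) ^ 2 * t ^ (p - 2) ≤ a * (p + 1) / 2) :
    tikhonovEnergyRate α q a p t F X V G xstar ≤ a * p / 2 * ‖xstar‖ ^ 2 := by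
  have hz : (p - 1) / 2 * t ^ (p - 2) * ‖(p + 1) • (X - xstar) + t • V‖ ^ 2
      ≤ |p - 1| * (p + 1) ^ 2 * t ^ (p - 2) * ‖X - xstar‖ ^ 2 + |p - 1| * t ^ p * ‖V‖ ^ 2 := by
    have hsq := norm_add_sq_le ((p + 1) • (X - xstar)) (t • V)
    rw [norm_smul, norm_smul, mul_pow, mul_pow, Real.norm_eq_abs, Real.norm_eq_abs, sq_abs,
      sq_abs] at hsq
    have htp : t ^ (p - 2) * t ^ 2 = t ^ p := by
      rw [← Real.rpow_two, ← Real.rpow_add ht]; ring_nf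
    calc (p - 1) / 2 * t ^ (p - 2) * ‖(p + 1) • (X - xstar) + t • V‖ ^ 2
        ≤ |p - 1| / 2 * t ^ (p - 2) * ‖(p + 1) • (X - xstar) + t • V‖ ^ 2 := by
          gcongr; exact le_abs_self _
      _ ≤ |p - 1| / 2 * t ^ (p - 2) * (2 * ((p + 1) ^ 2 * ‖X - xstar‖ ^ 2 + t ^ 2 * ‖V‖ ^ 2)) := by
          gcongr
      _ = _ := by rw [← htp]; ring
  have hconv : 0 ≤ (p + 1) * t ^ p * (⟪G, X - xstar⟫ - F) := by
    have := sub_nonneg.2 hF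
    positivity
  have hVterm : (p + 2 + |p - 1| - α * t ^ (1 - q)) * (t ^ p * ‖V‖ ^ 2) ≤ 0 :=
    mul_nonpos_of_nonpos_of_nonneg (by linarith) (by positivity)
  have hUterm := mul_nonpos_of_nonpos_of_nonneg (sub_nonpos.2 hU) (sq_nonneg ‖X - xstar‖)
  have hX : 0 ≤ a * p / 2 * ‖X‖ ^ 2 := by positivity
  unfold tikhonovEnergyRate
  linarith

theorem hasDerivAt_mul_tikhonovEnergy [CompleteSpace H] {g : H → ℝ} {xstar A G : H}
    {α q a p t : ℝ} {x x' : ℝ → H} (ht : 0 < t) (hg : HasGradientAt g G (x t))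
    (hx : HasDerivAt x (x' t) t) (hx' : HasDerivAt x' A t)
    (hODE : A + (α / t ^ q) • x' t + G + (a / t ^ p) • x t = 0) :
    HasDerivAt (fun s => s * tikhonovEnergy g xstar α q a p x x' s)
      (tikhonovEnergyRate α q a p t (g (x t) - g xstar) (x t) (x' t) G xstar) t := by
  have hpow (r : ℝ) : HasDerivAt (fun s : ℝ => s ^ r) (r * (t ^ r / t)) t := by
    simpa [Real.rpow_sub_one ht.ne'] using Real.hasDerivAt_rpow_const (p := r) (Or.inl ht.ne')
  have hgx : HasDerivAt (fun s => g (x s)) ⟪G, x' t⟫ t := by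
    have h := hg.hasFDerivAt.comp_hasDerivAt t hx
    rwa [InnerProductSpace.toDual_apply_apply] at h
  have hz := ((hx.sub_const xstar).const_smul (p + 1)).add ((hasDerivAt_id t).smul hx')
  have hE : HasDerivAt (tikhonovEnergy g xstar α q a p x x') _ t :=
    (((hpow p).mul (hgx.sub_const (g xstar))).add
      ((hx.norm_sq.sub_const (‖xstar‖ ^ 2)).const_mul (a / 2))).add
      (((hpow (p - 2)).div_const 2).mul hz.norm_sq) |>.add
      (((((hpow (p - q - 1)).const_mul α).sub ((hpow (p - 2)).const_mul (p + 2))).const_mul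
        ((p + 1) / 2)).mul (hx.sub_const xstar).norm_sq)
  refine ((hasDerivAt_id t).mul hE).congr_deriv ?_
  have hA : A = -((α / t ^ q) • x' t) - G - (a / t ^ p) • x t := by
    rw [← sub_eq_zero, ← hODE]; abel
  have h2 : t ^ (p - 2) = t ^ p / t ^ 2 := by
    rw [Real.rpow_sub ht, Real.rpow_two]
  have h3 : t ^ (p - q - 1) = t ^ p / (t ^ q * t) := by
    rw [Real.rpow_sub_one ht.ne', Real.rpow_sub ht, div_div]
  have h4 : t ^ (1 - q) = t / t ^ q := by
    rw [Real.rpow_sub ht, Real.rpow_one]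
  have hQ : 0 < t ^ q := Real.rpow_pos_of_pos ht q
  have hP : 0 < t ^ p := Real.rpow_pos_of_pos ht p
  simp only [tikhonovEnergy, tikhonovEnergyRate, hA, h2, h3, h4, ← real_inner_self_eq_norm_sq,
    Pi.add_apply, Pi.sub_apply, Pi.smul_apply, Pi.smul_apply', id_eq, one_smul,
    inner_add_left, inner_add_right, inner_sub_left, inner_sub_right,
    inner_neg_right, real_inner_smul_left, real_inner_smul_right]
  simp only [real_inner_comm]
  field_simp
  ring

end TikhonovEnergy

theorem stmt14_general
    {H : Type*} [NormedAddCommGroup H] [InnerProductSpace ℝ H] [CompleteSpace H]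
    (g : H → ℝ) (g' : H → H)
    (hg_convex : ConvexOn ℝ Set.univ g)
    (hg_grad : ∀ y : H, HasGradientAt g (g' y) y)
    (t₀ α q a p : ℝ) (hα : 0 < α) (ha0 : 0 < a) (hp0 : 0 < p)
    (x x' x'' : ℝ → H)
    (hx : ∀ t ≥ t₀, HasDerivAt x (x' t) t)
    (hx' : ∀ t ≥ t₀, HasDerivAt x' (x'' t) t)
    (hODE : ∀ t ≥ t₀, x'' t + (α / t ^ q) • x' t + g' (x t) + (a / t ^ p) • x t = 0)
    (xstar : H) (hxstar : ∀ y : H, g xstar ≤ g y)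
    (hq1 : q < 1) (hp2 : p ≤ (4 * q + 2) / 3) :
    (∃ C > (0:ℝ), ∃ t₁ ≥ t₀, ∀ t ≥ t₁, |g (x t) - g xstar| ≤ C / t ^ (p)) := by
  obtain ⟨t₁, ht₁⟩ := eventually_atTop.1 <|
    (eventually_tikhonov_rate_conditions (p := p) hα ha0 hq1 (by linarith) (by linarith)).and <|
      (eventually_ge_atTop t₀).and (eventually_gt_atTop 0)
  obtain ⟨-, ht₁t₀, ht₁0⟩ := ht₁ t₁ le_rfl
  set E := tikhonovEnergy g xstar α q a p x x'
  set C₀ := a * p / 2 * ‖xstar‖ ^ 2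
  have hrate (s : ℝ) (hs : s ≥ t₁) :
      HasDerivAt (fun r => r * E r)
        (tikhonovEnergyRate α q a p s (g (x s) - g xstar) (x s) (x' s) (g' (x s)) xstar) s ∧
      tikhonovEnergyRate α q a p s (g (x s) - g xstar) (x s) (x' s) (g' (x s)) xstar ≤ C₀ := by
    obtain ⟨⟨hV, hU⟩, hst₀, hs0⟩ := ht₁ s hs
    refine ⟨hasDerivAt_mul_tikhonovEnergy hs0 (hg_grad _) (hx s hst₀) (hx' s hst₀) (hODE s hst₀),
      tikhonovEnergyRate_le ha0.le hp0.le hs0 ?_ hV hU⟩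
    have := hg_convex.add_inner_sub_le_of_hasGradientAt (hg_grad (x s)) xstar
    rw [inner_sub_right] at this ⊢
    linarith
  refine ⟨|E t₁| + C₀ + a / 2 * ‖xstar‖ ^ 2 + 1, by positivity, t₁, ht₁t₀, fun t ht => ?_⟩
  obtain ⟨⟨hV, -⟩, -, ht0⟩ := ht₁ t ht
  have hE_le := le_abs_add_of_hasDerivAt_mul_le ht₁0 (by positivity)
    (fun s hs => (hrate s hs).1) (fun s hs => (hrate s hs).2) ht
  have hE_ge : t ^ p * (g (x t) - g xstar) - a / 2 * ‖xstar‖ ^ 2 ≤ E t :=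
    tikhonovEnergy_ge ha0.le (by linarith) ht0 (by linarith [abs_nonneg (p - 1)])
  rw [abs_of_nonneg (sub_nonneg.2 (hxstar _)), le_div_iff₀ (Real.rpow_pos_of_pos ht0 p)]
  linarith

theorem stmt14
    {H : Type*} [NormedAddCommGroup H] [InnerProductSpace ℝ H] [CompleteSpace H]
    (g : H → ℝ) (g' : H → H)
    (hg_convex : ConvexOn ℝ Set.univ g)
    (hg_grad : ∀ y : H, HasGradientAt g (g' y) y)
    (hg_lip : ∀ s : Set H, Bornology.IsBounded s → ∃ K : NNReal, LipschitzOnWith K g' s)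
    (t₀ α q a p : ℝ) (ht₀ : 0 < t₀) (hα : 0 < α) (hq0 : 0 < q) (ha0 : 0 < a) (hp0 : 0 < p)
    (x x' x'' : ℝ → H)
    (hx : ∀ t ≥ t₀, HasDerivAt x (x' t) t)
    (hx' : ∀ t ≥ t₀, HasDerivAt x' (x'' t) t)
    (hx''c : ContinuousOn x'' (Set.Ici t₀))
    (hODE : ∀ t ≥ t₀, x'' t + (α / t ^ q) • x' t + g' (x t) + (a / t ^ p) • x t = 0)
    (xstar : H) (hxstar : ∀ y : H, g xstar ≤ g y)
    (hq1 : q < 1) (hp1 : (3 * q + 1) / 2 ≤ p) (hp2 : p ≤ (4 * q + 2) / 3) :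
    (∃ C > (0:ℝ), ∃ t₁ ≥ t₀, ∀ t ≥ t₁, |g (x t) - g xstar| ≤ C / t ^ (p)) :=
  stmt14_general g g' hg_convex hg_grad t₀ α q a p hα ha0 hp0 x x' x'' hx hx' hODE xstar hxstar hq1
    hp2
end
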